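/- arXiv:1210.0179 — 3 statements merged into one kernel-verified Lean document; each statement's English description precedes it below -/
import Mathlib

section
/- Let s ∈ (0,1) be irrational, with continued fraction expansion s = [0; a₁, a₂, a₃, …]. Then R^n(s) < 1/2 for every integer n ≥ 0 if and only if a_k is even for every odd index k. -/
noncomputable section

open Set Topology Filter

/-- The parallelogram `X_s = F₁(s)`, centered at the origin and spanned by the
vectors `(2,0)` and `(2s,2s)`. -/
def F1 (s : ℝ) : Set (ℝ × ℝ) :=
  {p | ∃ a b : ℝ, a ∈ Icc (-(1:ℝ)/2) (1/2) ∧ b ∈ Icc (-(1:ℝ)/2) (1/2) ∧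
    p = (2 * a + 2 * s * b, 2 * s * b)}

/-- Rotation by `π/2` about the origin. -/
def rotQ (p : ℝ × ℝ) : ℝ × ℝ := (-p.2, p.1)

/-- `F₂(s)`, the image of `F₁(s)` under rotation by `π/2` about the origin. -/
def F2 (s : ℝ) : Set (ℝ × ℝ) := rotQ '' F1 s

/-- The lattice `L₁` generated by `(0,2)` and `(2s,2s)`. -/
def L1 (s : ℝ) : Set (ℝ × ℝ) :=
  {v | ∃ m n : ℤ, v = (2 * s * n, 2 * m + 2 * s * n)}

/-- The lattice `L₂` generated by `(2,0)` and `(2s,−2s)`. -/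
def L2 (s : ℝ) : Set (ℝ × ℝ) :=
  {v | ∃ m n : ℤ, v = (2 * m + 2 * s * n, -(2 * s * n))}

/-- `F_j` indexed by `Fin 2` (index `0` is `F₁`, index `1` is `F₂`). -/
def FF (s : ℝ) : Fin 2 → Set (ℝ × ℝ) := fun j => if j = 0 then F1 s else F2 s

/-- `L_j` indexed by `Fin 2` (index `0` is `L₁`, index `1` is `L₂`). -/
def LL (s : ℝ) : Fin 2 → Set (ℝ × ℝ) := fun j => if j = 0 then L1 s else L2 s

/-- One application of the map `f′`, as a relation: `StepRel s p q` holds iff `p ∈ F_j`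
for some `j`, there is a unique `v ∈ L_{3−j}` with `p + v ∈ F_{3−j}`, and `q = p + v`
(i.e. `q − p ∈ L_{3−j}` and `q ∈ F_{3−j}`).  `f′` is undefined where the translation
is not unique. -/
def StepRel (s : ℝ) (p q : ℝ × ℝ) : Prop :=
  ∃ j : Fin 2, p ∈ FF s j ∧ (∃! v, v ∈ LL s (j + 1) ∧ p + v ∈ FF s (j + 1)) ∧
    q - p ∈ LL s (j + 1) ∧ q ∈ FF s (j + 1)

/-- The octagonal PET map `f_s = (f′)²`, as a relation. -/
def MapRel (s : ℝ) (p q : ℝ × ℝ) : Prop := ∃ r, StepRel s p r ∧ StepRel s r q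

/-- `n`-fold iteration of the (partially defined) map `f_s`, as a relation. -/
def IterRel (s : ℝ) : ℕ → ℝ × ℝ → ℝ × ℝ → Prop
  | 0, p, q => p = q
  | n + 1, p, q => ∃ r, IterRel s n p r ∧ MapRel s r q

/-- A convex polygon: the convex hull of a finite set of points, with nonempty interior. -/
def IsConvexPolygon (P : Set (ℝ × ℝ)) : Prop :=
  (∃ V : Finset (ℝ × ℝ), P = convexHull ℝ (V : Set (ℝ × ℝ))) ∧ (interior P).Nonempty

/-- A periodic tile of `(X_s, f_s)`: a maximal convex polygon in `X_s` on whose interior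
`f_s` and all its iterates are defined and periodic. -/
def IsPeriodicTile (s : ℝ) (P : Set (ℝ × ℝ)) : Prop :=
  IsConvexPolygon P ∧ P ⊆ F1 s ∧
    (∃ n, 0 < n ∧ ∀ p ∈ interior P, IterRel s n p p) ∧
    ∀ Q, IsConvexPolygon Q → Q ⊆ F1 s →
      (∃ n, 0 < n ∧ ∀ p ∈ interior Q, IterRel s n p p) → P ⊆ Q → P = Q

/-- The tiling `Δ_s`: the collection of all periodic tiles. -/
def tiles (s : ℝ) : Set (Set (ℝ × ℝ)) := {P | IsPeriodicTile s P}

/-- The limit set `Λ̂_s`: points of `X_s` every neighborhood of which meets infinitely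
many tiles of `Δ_s`. -/
def limitSet (s : ℝ) : Set (ℝ × ℝ) :=
  {p | p ∈ F1 s ∧ ∀ U ∈ 𝓝 p, {P ∈ tiles s | (U ∩ P).Nonempty}.Infinite}

/-- The renormalization map `R`. -/
def Rmap (x : ℝ) : ℝ :=
  if x < 1 / 2 then 1 / (2 * x) - (⌊1 / (2 * x)⌋ : ℤ) else 1 - x

/-- The central tiles of `Δ_s`: for `s > 1/2` the single octagon `F₁ ∩ F₂`; for
`s ≤ 1/2` the squares of the grid generated by the square `F₁ ∩ F₂` that lie in `X_s`. -/
def centralTiles (s : ℝ) : Set (Set (ℝ × ℝ)) :=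
  if 1 / 2 < s then {F1 s ∩ F2 s}
  else {T | (∃ m n : ℤ,
        T = (fun p : ℝ × ℝ => (p.1 + 2 * s * m, p.2 + 2 * s * n)) '' (F1 s ∩ F2 s)) ∧
      T ⊆ F1 s}

/-- The portion of a set `S ⊆ X_s` lying to the left of the central tiles of `Δ_s`
(the closure of the set of points of `S` lying strictly to the left of every point of
every central tile). -/
def leftPart (s : ℝ) (S : Set (ℝ × ℝ)) : Set (ℝ × ℝ) :=
  closure {p ∈ S | ∀ T ∈ centralTiles s, ∀ q ∈ T, p.1 < q.1}

/-- `X_s⁰`, the left half of `X_s`. -/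
def Xzero (s : ℝ) : Set (ℝ × ℝ) := leftPart s (F1 s)

/-- `S_s = Λ̂_s ∩ X_s⁰`, the left half of the limit set. -/
def leftLimitSet (s : ℝ) : Set (ℝ × ℝ) := limitSet s ∩ Xzero s

/-- Dot product in the plane. -/
def dot2 (v w : ℝ × ℝ) : ℝ := v.1 * w.1 + v.2 * w.2

/-- Cross product (signed area form) in the plane. -/
def cross2 (v w : ℝ × ℝ) : ℝ := v.1 * w.2 - v.2 * w.1

/-- The Euclidean distance on `ℝ × ℝ`. -/
def eudist (p q : ℝ × ℝ) : ℝ := Real.sqrt ((p.1 - q.1) ^ 2 + (p.2 - q.2) ^ 2)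

/-- A (solid) square in the plane. -/
def IsSquareSet (P : Set (ℝ × ℝ)) : Prop :=
  ∃ p v w : ℝ × ℝ, dot2 v w = 0 ∧ dot2 v v = dot2 w w ∧ v ≠ 0 ∧
    P = {q | ∃ a b : ℝ, a ∈ Icc (0:ℝ) 1 ∧ b ∈ Icc (0:ℝ) 1 ∧ q = p + a • v + b • w}

/-- Rotation by `π/4` about the origin. -/
def rot45 (v : ℝ × ℝ) : ℝ × ℝ :=
  ((v.1 - v.2) / Real.sqrt 2, (v.1 + v.2) / Real.sqrt 2)

/-- A (solid) semi-regular octagon: a convex octagon whose interior angles all equal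
`3π/4` (so consecutive edge directions differ by rotation by `π/4`) and whose side
lengths alternate between two values `a` and `b`. -/
def IsSemiregularOctagon (P : Set (ℝ × ℝ)) : Prop :=
  ∃ (p u : ℝ × ℝ) (a b : ℝ), dot2 u u = 1 ∧ 0 < a ∧ 0 < b ∧
    P = convexHull ℝ (Set.range fun k : Fin 8 =>
      p + ∑ i ∈ Finset.range k.1, (if Even i then a else b) • rot45^[i] u)

/-- A box: a square with sides parallel to the coordinate axes. -/
def IsBox (P : Set (ℝ × ℝ)) : Prop :=
  ∃ (p : ℝ × ℝ) (c : ℝ), 0 < c ∧ P = Icc p (p + (c, c))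

/-- A diamond: a square whose sides have slope `±1`. -/
def IsDiamond (P : Set (ℝ × ℝ)) : Prop :=
  ∃ (p : ℝ × ℝ) (c : ℝ), 0 < c ∧
    P = convexHull ℝ {p + (c, 0), p - (c, 0), p + (0, c), p - (0, c)}

/-- The horizontal fundamental line of symmetry `H : y = 0`. -/
def lineH : Set (ℝ × ℝ) := {p | p.2 = 0}

/-- The vertical fundamental line of symmetry `V : x = −1`. -/
def lineV : Set (ℝ × ℝ) := {p | p.1 = -1}

/-- The fundamental line of symmetry `D_s`, of slope `−1` through `(−s,−s)`. -/
def lineD (s : ℝ) : Set (ℝ × ℝ) := {p | p.1 + p.2 = -2 * s}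

/-- The fundamental line of symmetry `E_s`: for `s ≤ 1/2` the line of slope `−1`
through `(−3s,−3s)`, for `s > 1/2` the line of slope `1` through `(−s,−s)`. -/
def lineE (s : ℝ) : Set (ℝ × ℝ) :=
  if s ≤ 1 / 2 then {p | p.1 + p.2 = -6 * s} else {p | p.2 = p.1}


/-- The Gauss map `x ↦ 1/x − ⌊1/x⌋`.  For irrational `s ∈ (0,1)` the partial quotients of
the continued fraction expansion `s = [0; a₁, a₂, …]` are `a_k = ⌊1 / gaussMap^[k−1] s⌋`. -/
def gaussMap (x : ℝ) : ℝ := 1 / x - (⌊1 / x⌋ : ℤ)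

lemma gauss_mem (s : ℝ) (hs : s ∈ Ioo (0:ℝ) 1) (hirr : Irrational s) :
    gaussMap s ∈ Ioo (0:ℝ) 1 ∧ Irrational (gaussMap s) := by
  have h1 : Irrational (1/s) := by rw [one_div]; exact hirr.inv
  have h2 : Irrational (gaussMap s) := h1.sub_intCast _
  have hne : gaussMap s ≠ 0 := by simpa using h2.ne_int 0
  have hfr : gaussMap s = Int.fract (1/s) := rfl
  refine ⟨⟨?_, ?_⟩, h2⟩
  · rcases (Int.fract_nonneg (1/s)).lt_or_eq with h | h
    · rw [hfr]; exact h
    · exact absurd (hfr.trans h.symm) hne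
  · rw [hfr]; exact Int.fract_lt_one _

lemma one_lt_inv_cf (s : ℝ) (hs : s ∈ Ioo (0:ℝ) 1) : 1 < 1/s :=
  one_lt_one_div hs.1 hs.2

lemma lt_half_of_even (s : ℝ) (hs : s ∈ Ioo (0:ℝ) 1) (hirr : Irrational s)
    (he : Even ⌊1/s⌋) : s < 1/2 := by
  have h1 : 1 < 1/s := one_lt_inv_cf s hs
  have hfl : (1:ℤ) ≤ ⌊1/s⌋ := by
    rw [Int.le_floor]; exact_mod_cast h1.le
  obtain ⟨m, hm⟩ := he
  have h2 : (2:ℤ) ≤ ⌊1/s⌋ := by omega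
  have h3 : (2:ℝ) ≤ 1/s := le_trans (by exact_mod_cast h2) (Int.floor_le _)
  have hi : Irrational (1/s) := by rw [one_div]; exact hirr.inv
  have h4 : (1/s) ≠ 2 := by simpa using hi.ne_int 2
  have h5 : (2:ℝ) < 1/s := lt_of_le_of_ne h3 (Ne.symm h4)
  have hss : s * (1/s) = 1 := by rw [mul_one_div, div_self hs.1.ne']
  nlinarith [hss, h5, hs.1]

lemma floor_pos_cf (s : ℝ) (hs : s ∈ Ioo (0:ℝ) 1) : (1:ℤ) ≤ ⌊1/s⌋ := by
  rw [Int.le_floor]; exact_mod_cast (one_lt_inv_cf s hs).le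

lemma key_eq (s : ℝ) : 1/s = (⌊1/s⌋ : ℝ) + gaussMap s := by unfold gaussMap; ring

lemma half_inv (s : ℝ) (hs0 : s ≠ 0) : 1/(2*s) = (1/s)/2 := by
  rw [div_div, mul_comm]

lemma Rmap_even_eq (s : ℝ) (hs : s ∈ Ioo (0:ℝ) 1) (hirr : Irrational s)
    (he : Even ⌊1/s⌋) : Rmap s = gaussMap s / 2 := by
  obtain ⟨⟨hg0, hg1⟩, -⟩ := gauss_mem s hs hirr
  obtain ⟨m, hm⟩ := he
  have hslt : s < 1/2 := lt_half_of_even s hs hirr ⟨m, hm⟩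
  have h2s : 1/(2*s) = (m:ℝ) + gaussMap s / 2 := by
    rw [half_inv s hs.1.ne', key_eq s, hm]; push_cast; ring
  have hfl : ⌊1/(2*s)⌋ = m := by
    rw [h2s, Int.floor_intCast_add, Int.floor_eq_zero_iff.mpr ⟨by linarith, by linarith⟩,
      add_zero]
  unfold Rmap
  rw [if_pos hslt, hfl, h2s]; ring

lemma Rmap_odd_ge (s : ℝ) (hs : s ∈ Ioo (0:ℝ) 1) (hirr : Irrational s)
    (hslt : s < 1/2) (ho : Odd ⌊1/s⌋) : 1/2 ≤ Rmap s := by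
  obtain ⟨⟨hg0, hg1⟩, -⟩ := gauss_mem s hs hirr
  obtain ⟨m, hm⟩ := ho
  have hfl1 : (1:ℤ) ≤ ⌊1/s⌋ := floor_pos_cf s hs
  have hm0 : 0 ≤ m := by omega
  have h2s : 1/(2*s) = (m:ℝ) + (1 + gaussMap s) / 2 := by
    rw [half_inv s hs.1.ne', key_eq s, hm]; push_cast; ring
  have hfl : ⌊1/(2*s)⌋ = m := by
    rw [h2s, Int.floor_intCast_add, Int.floor_eq_zero_iff.mpr ⟨by linarith, by linarith⟩,
      add_zero]
  unfold Rmap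
  rw [if_pos hslt, hfl, h2s]
  linarith

lemma Rmap_half (g : ℝ) (hg : g ∈ Ioo (0:ℝ) 1) : Rmap (g/2) = gaussMap g := by
  have h1 : g/2 < 1/2 := by linarith [hg.2]
  have h2 : 2*(g/2) = g := by ring
  unfold Rmap gaussMap
  rw [if_pos h1, h2]

lemma even_a1 (s : ℝ) (hs : s ∈ Ioo (0:ℝ) 1) (hirr : Irrational s)
    (hP : ∀ n : ℕ, Rmap^[n] s < 1 / 2) : Even ⌊1/s⌋ := by
  by_contra ho
  have hslt : s < 1/2 := by simpa using hP 0
  have := Rmap_odd_ge s hs hirr hslt (Int.not_even_iff_odd.mp ho)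
  have h1 := hP 1
  rw [Function.iterate_one] at h1
  linarith

lemma iter2_eq (s : ℝ) (hs : s ∈ Ioo (0:ℝ) 1) (hirr : Irrational s)
    (he : Even ⌊1/s⌋) : Rmap^[2] s = gaussMap^[2] s := by
  obtain ⟨hg, hgi⟩ := gauss_mem s hs hirr
  show Rmap (Rmap^[1] s) = gaussMap (gaussMap^[1] s)
  rw [Function.iterate_one, Function.iterate_one, Rmap_even_eq s hs hirr he,
    Rmap_half _ hg]

lemma shiftP (s : ℝ) (hs : s ∈ Ioo (0:ℝ) 1) (hirr : Irrational s)
    (hP : ∀ n : ℕ, Rmap^[n] s < 1 / 2) :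
    ∀ n : ℕ, Rmap^[n] (gaussMap^[2] s) < 1 / 2 := by
  intro n
  have he := even_a1 s hs hirr hP
  have := hP (n + 2)
  rwa [Function.iterate_add_apply, iter2_eq s hs hirr he] at this

lemma gauss2_mem (s : ℝ) (hs : s ∈ Ioo (0:ℝ) 1) (hirr : Irrational s) :
    gaussMap^[2] s ∈ Ioo (0:ℝ) 1 ∧ Irrational (gaussMap^[2] s) := by
  obtain ⟨h1, h2⟩ := gauss_mem s hs hirr
  have := gauss_mem _ h1 h2
  rwa [show gaussMap^[2] s = gaussMap (gaussMap s) by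
    rw [show (2:ℕ) = 1 + 1 from rfl, Function.iterate_add_apply, Function.iterate_one]]

lemma forward_cf (m : ℕ) : ∀ s : ℝ, s ∈ Ioo (0:ℝ) 1 → Irrational s →
    (∀ n : ℕ, Rmap^[n] s < 1 / 2) → Even ⌊1 / gaussMap^[2*m] s⌋ := by
  induction m with
  | zero => intro s hs hirr hP; simpa using even_a1 s hs hirr hP
  | succ m ih =>
    intro s hs hirr hP
    obtain ⟨hs', hirr'⟩ := gauss2_mem s hs hirr
    have := ih _ hs' hirr' (shiftP s hs hirr hP)
    rwa [← Function.iterate_add_apply, show 2*m + 2 = 2*(m+1) by ring] at this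

lemma backward_cf (n : ℕ) : ∀ s : ℝ, s ∈ Ioo (0:ℝ) 1 → Irrational s →
    (∀ m : ℕ, Even ⌊1 / gaussMap^[2*m] s⌋) → Rmap^[n] s < 1 / 2 := by
  induction n using Nat.strong_induction_on with
  | _ n ih =>
    intro s hs hirr hQ
    have ha1 : Even ⌊1/s⌋ := by simpa using hQ 0
    have hslt : s < 1/2 := lt_half_of_even s hs hirr ha1
    obtain ⟨⟨hg0, hg1⟩, -⟩ := gauss_mem s hs hirr
    match n with
    | 0 => simpa using hslt
    | 1 => rw [Function.iterate_one, Rmap_even_eq s hs hirr ha1]; linarith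
    | (k+2) =>
      rw [show k + 2 = k + 2 from rfl, Function.iterate_add_apply,
        iter2_eq s hs hirr ha1]
      obtain ⟨hs', hirr'⟩ := gauss2_mem s hs hirr
      refine ih k (by omega) _ hs' hirr' ?_
      intro j
      have := hQ (j + 1)
      rwa [show 2*(j+1) = 2*j + 2 by ring, Function.iterate_add_apply] at this

/-- For irrational `s ∈ (0,1)` with continued fraction expansion
`s = [0; a₁, a₂, …]`, one has `R^n(s) < 1/2` for all `n ≥ 0` iff `a_k` is even for every
odd index `k`. -/
theorem Rorbit_lt_half_iff_oddly_even (s : ℝ) (hs : s ∈ Ioo (0:ℝ) 1)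
    (hirr : Irrational s) :
    (∀ n : ℕ, Rmap^[n] s < 1 / 2) ↔
      ∀ k : ℕ, Odd k → Even ⌊1 / gaussMap^[k - 1] s⌋ := by
  constructor
  · intro hP k hk
    obtain ⟨m, rfl⟩ := hk
    have h := forward_cf m s hs hirr hP
    simpa [show 2*m + 1 - 1 = 2*m from rfl] using h
  · intro hQ n
    refine backward_cf n s hs hirr ?_
    intro m
    have := hQ (2*m + 1) ⟨m, by ring⟩
    simpa [show 2*m + 1 - 1 = 2*m from rfl] using this


end
end

section
/- Let s ∈ (0,1) be irrational with R^n(s) < 1/2 for all integers n ≥ 0 (an oddly even irrational). Then there exists a sequence of rational numbers r_m ∈ (0,1) converging to s such that for every m and every integer n ≥ 0, R^n(r_m) ∉ (1/2,1) (i.e. each r_m is an oddly even rational). -/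
noncomputable section

open Set Topology Filter

private lemma Rmap_of_lt {x : ℝ} (hx : x < 1/2) :
    Rmap x = 1/(2*x) - (⌊1/(2*x)⌋ : ℤ) := if_pos hx

private lemma iter_half (n : ℕ) : Rmap^[n] (1/2:ℝ) = 1/2 := by
  induction n with
  | zero => rfl
  | succ n ih => rw [Function.iterate_succ_apply', ih]; norm_num [Rmap]

private lemma iter_zero (n : ℕ) : Rmap^[n] (0:ℝ) = 0 := by
  induction n with
  | zero => rfl
  | succ n ih => rw [Function.iterate_succ_apply', ih]; norm_num [Rmap]

private lemma ok_step (a : ℤ) (ha : 1 ≤ a) (t : ℝ) (ht0 : 0 ≤ t) (ht : t ≤ 1/2)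
    (hok : ∀ n, Rmap^[n] t ∉ Ioo (1/2:ℝ) 1) :
    ∀ n, Rmap^[n] (1/(2*((a:ℝ)+t))) ∉ Ioo (1/2:ℝ) 1 := by
  have hat : (1:ℝ) ≤ (a:ℝ) + t := by
    have : (1:ℝ) ≤ (a:ℝ) := by exact_mod_cast ha
    linarith
  set y : ℝ := 1/(2*((a:ℝ)+t)) with hy
  have hy0 : 0 < y := by positivity
  have hy2 : y ≤ 1/2 := by
    rw [hy, div_le_div_iff₀ (by positivity) (by norm_num)]; linarith
  rcases eq_or_lt_of_le hy2 with heq | hlt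
  · intro n; rw [heq, iter_half]; simp
  · have hR : Rmap y = t := by
      have h2y : 1/(2*y) = (a:ℝ) + t := by
        rw [hy]; field_simp
      rw [Rmap_of_lt hlt, h2y]
      have : ⌊(a:ℝ) + t⌋ = a := by
        rw [add_comm, Int.floor_add_intCast]
        have : ⌊t⌋ = 0 := Int.floor_eq_zero_iff.2 ⟨ht0, by linarith⟩
        omega
      rw [this]; ring
    intro n
    cases n with
    | zero => simp only [Function.iterate_zero, id]; intro hmem; exact absurd hmem.1 (by linarith)
    | succ n => rw [Function.iterate_succ_apply, hR]; exact hok n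

private lemma g_lip (a : ℤ) (ha : 1 ≤ a) (t u : ℝ) (ht : 0 ≤ t) (hu : 0 ≤ u) :
    |1/(2*((a:ℝ)+t)) - 1/(2*((a:ℝ)+u))| ≤ |t - u| / 2 := by
  have ha' : (1:ℝ) ≤ (a:ℝ) := by exact_mod_cast ha
  have hat : (1:ℝ) ≤ (a:ℝ) + t := by linarith
  have hau : (1:ℝ) ≤ (a:ℝ) + u := by linarith
  have key : 1/(2*((a:ℝ)+t)) - 1/(2*((a:ℝ)+u)) = (u - t)/(2*(((a:ℝ)+t)*((a:ℝ)+u))) := by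
    field_simp; ring
  have hprod : (1:ℝ) ≤ ((a:ℝ)+t)*((a:ℝ)+u) := by nlinarith
  have hden : (0:ℝ) < 2*(((a:ℝ)+t)*((a:ℝ)+u)) := by nlinarith
  rw [key, abs_div, abs_of_pos hden, abs_sub_comm,
    div_le_div_iff₀ hden (by norm_num : (0:ℝ) < 2)]
  nlinarith [abs_nonneg (t-u)]

private def trunc (a : ℕ → ℤ) : ℕ → ℕ → ℚ
  | _, 0 => 0
  | k, j+1 => 1/(2*((a k : ℚ) + trunc a (k+1) j))


/-- Every oddly even irrational `s ∈ (0,1)` is the limit of a sequence of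
oddly even rationals in `(0,1)`. -/
theorem exists_oddly_even_rational_approx (s : ℝ) (hs : s ∈ Ioo (0:ℝ) 1)
    (hirr : Irrational s) (h : ∀ n : ℕ, Rmap^[n] s < 1 / 2) :
    ∃ r : ℕ → ℚ, (∀ m, (r m : ℝ) ∈ Ioo (0:ℝ) 1) ∧
      (∀ m n : ℕ, Rmap^[n] (r m : ℝ) ∉ Ioo (1 / 2 : ℝ) 1) ∧
      Tendsto (fun m => (r m : ℝ)) atTop (𝓝 s) := by
  obtain ⟨hs0, hs1⟩ := hs
  set x : ℕ → ℝ := fun n => Rmap^[n] s with hxdef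
  set a : ℕ → ℤ := fun n => ⌊1/(2 * x n)⌋ with hadef
  have hstep : ∀ n, x (n+1) = Rmap (x n) := fun n => Function.iterate_succ_apply' Rmap n s
  have hlt : ∀ n, x n < 1/2 := h
  -- basic facts along the orbit
  have hbasic : ∀ n, Irrational (x n) ∧ 0 < x n := by
    intro n; induction n with
    | zero => exact ⟨hirr, hs0⟩
    | succ n ih =>
      obtain ⟨hi, hp⟩ := ih
      have hinv : Irrational (1/(2 * x n)) := by
        have h2 : Irrational (2 * x n) := by
          have := Irrational.ratCast_mul hi (q := 2) (by norm_num); simpa using this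
        simpa [one_div] using h2.inv
      have hR : x (n+1) = 1/(2*x n) - (⌊1/(2*x n)⌋ : ℤ) := by
        rw [hstep n, Rmap_of_lt (hlt n)]
      have hirr' : Irrational (x (n+1)) := by rw [hR]; exact Irrational.sub_intCast hinv _
      refine ⟨hirr', ?_⟩
      have hnn : 0 ≤ x (n+1) := by
        rw [hR]; exact sub_nonneg.2 (Int.floor_le _)
      rcases hnn.lt_or_eq with h' | h'
      · exact h'
      · exact absurd h'.symm hirr'.ne_zero
  have ha1 : ∀ n, 1 ≤ a n := by
    intro n
    have hp := (hbasic n).2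
    have h1 : (1:ℝ) < 1/(2 * x n) := by
      rw [lt_div_iff₀ (by positivity)]; linarith [hlt n]
    exact Int.le_floor.2 (by exact_mod_cast h1.le)
  have hrec : ∀ n, x n = 1/(2*((a n : ℝ) + x (n+1))) := by
    intro n
    have hp := (hbasic n).2
    have hR : x (n+1) = 1/(2*x n) - (a n : ℝ) := by
      rw [hstep n, Rmap_of_lt (hlt n)]
    have : (a n : ℝ) + x (n+1) = 1/(2 * x n) := by rw [hR]; ring
    rw [this]; field_simp
  have hxbd : ∀ n, 0 < x n ∧ x n ≤ 1/2 := fun n => ⟨(hbasic n).2, le_of_lt (hlt n)⟩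
  -- properties of truncations, by induction on depth
  have hmain : ∀ j k, (0 ≤ (trunc a k j : ℝ) ∧ (trunc a k j : ℝ) ≤ 1/2) ∧
      (∀ n, Rmap^[n] ((trunc a k j : ℝ)) ∉ Ioo (1/2:ℝ) 1) ∧
      |x k - (trunc a k j : ℝ)| ≤ (1/2)^j * (1/2) := by
    intro j; induction j with
    | zero =>
      intro k
      refine ⟨⟨by simp [trunc], by norm_num [trunc]⟩, ?_, ?_⟩
      · intro n; rw [show ((trunc a k 0 : ℚ) : ℝ) = 0 by norm_num [trunc], iter_zero]
        simp
      · rw [show ((trunc a k 0 : ℚ) : ℝ) = 0 by norm_num [trunc]]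
        simp only [pow_zero, one_mul, sub_zero]
        rw [abs_of_pos (hxbd k).1]; exact (hxbd k).2
    | succ j ih =>
      intro k
      obtain ⟨⟨h0, h2⟩, hok, happ⟩ := ih (k+1)
      have hcast : ((trunc a k (j+1) : ℚ) : ℝ) = 1/(2*((a k : ℝ) + (trunc a (k+1) j : ℝ))) := by
        simp only [trunc]; push_cast; ring
      have hat : (1:ℝ) ≤ (a k : ℝ) + (trunc a (k+1) j : ℝ) := by
        have : (1:ℝ) ≤ (a k : ℝ) := by exact_mod_cast ha1 k
        linarith
      refine ⟨⟨?_, ?_⟩, ?_, ?_⟩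
      · rw [hcast]; positivity
      · rw [hcast, div_le_div_iff₀ (by positivity) (by norm_num)]; linarith
      · rw [hcast]; exact ok_step (a k) (ha1 k) _ h0 h2 hok
      · rw [hcast, hrec k]
        calc |1/(2*((a k : ℝ) + x (k+1))) - 1/(2*((a k : ℝ) + (trunc a (k+1) j : ℝ)))|
            ≤ |x (k+1) - (trunc a (k+1) j : ℝ)| / 2 :=
              g_lip (a k) (ha1 k) _ _ (le_of_lt (hxbd (k+1)).1) h0
          _ ≤ ((1/2)^j * (1/2)) / 2 := by linarith
          _ = (1/2)^(j+1) * (1/2) := by ring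
  refine ⟨fun m => trunc a 0 (m+1), ?_, ?_, ?_⟩
  · intro m
    obtain ⟨⟨h0, h2⟩, -, -⟩ := hmain (m+1) 0
    have hpos : (0:ℝ) < (trunc a 0 (m+1) : ℝ) := by
      have hcast : ((trunc a 0 (m+1) : ℚ) : ℝ)
          = 1/(2*((a 0 : ℝ) + (trunc a 1 m : ℝ))) := by
        simp only [trunc]; push_cast; ring
      obtain ⟨⟨hh0, -⟩, -, -⟩ := hmain m 1
      have : (1:ℝ) ≤ (a 0 : ℝ) := by exact_mod_cast ha1 0
      rw [hcast]; positivity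
    exact ⟨hpos, by linarith⟩
  · intro m n; exact (hmain (m+1) 0).2.1 n
  · have hx0 : x 0 = s := rfl
    rw [tendsto_iff_dist_tendsto_zero]
    have hsq : ∀ m, dist ((trunc a 0 (m+1) : ℚ) : ℝ) s ≤ (1/2)^m := by
      intro m
      have := (hmain (m+1) 0).2.2
      rw [hx0] at this
      rw [Real.dist_eq, abs_sub_comm]
      calc |s - ((trunc a 0 (m+1) : ℚ) : ℝ)| ≤ (1/2)^(m+1) * (1/2) := this
        _ ≤ (1/2)^m := by
          rw [pow_succ]
          have : (0:ℝ) ≤ (1/2)^m := by positivity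
          nlinarith
    have hlim : Tendsto (fun m : ℕ => ((1:ℝ)/2)^m) atTop (𝓝 0) :=
      tendsto_pow_atTop_nhds_zero_of_lt_one (by norm_num) (by norm_num)
    exact squeeze_zero (fun m => dist_nonneg) hsq hlim

end
end

section
/- Let S ⊆ ℝ² be a compact set. If for every ε > 0 the set S fills some chain of marked pieces having mesh less than ε, then S is an arc, i.e. S is homeomorphic to the interval [0,1]. -/
noncomputable section

open Set Topology Filter

/-- A marked piece: a compact convex polygon together with two distinguished vertices. -/
structure MarkedPiece where
  carrier : Set (ℝ × ℝ)
  m₁ : ℝ × ℝ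
  m₂ : ℝ × ℝ
  polygon : ∃ V : Finset (ℝ × ℝ), carrier = convexHull ℝ (V : Set (ℝ × ℝ))
  vertex₁ : m₁ ∈ Set.extremePoints ℝ carrier
  vertex₂ : m₂ ∈ Set.extremePoints ℝ carrier
  ne : m₁ ≠ m₂

/-- `p` is a marked point of the marked piece `D`. -/
def IsMarkedOf (p : ℝ × ℝ) (D : MarkedPiece) : Prop := p = D.m₁ ∨ p = D.m₂

/-- `D 0, …, D (n−1)` is a chain of marked pieces: consecutive pieces meet in a single
point which is marked in both, and non-consecutive pieces are disjoint. -/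
def IsChainOf (n : ℕ) (D : ℕ → MarkedPiece) : Prop :=
  (∀ i, i + 1 < n → ∃ p, (D i).carrier ∩ (D (i + 1)).carrier = {p} ∧
    IsMarkedOf p (D i) ∧ IsMarkedOf p (D (i + 1))) ∧
  ∀ i j, i + 2 ≤ j → j < n → (D i).carrier ∩ (D j).carrier = ∅

/-- A compact set `S` fills a chain: `S` is contained in the union of the pieces and
contains every marked point of the chain. -/
def Fills (S : Set (ℝ × ℝ)) (n : ℕ) (D : ℕ → MarkedPiece) : Prop :=
  S ⊆ (⋃ i ∈ Finset.range n, (D i).carrier) ∧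
    ∀ i < n, (D i).m₁ ∈ S ∧ (D i).m₂ ∈ S

/-! ### Auxiliary development for the arc criterion -/

namespace ArcCrit

open Metric

/-- A cut of a compact set `S` at a point `p`: two closed pieces covering `S`,
meeting exactly in `{p}`, both nontrivial. -/
def IsCut (S : Set (ℝ × ℝ)) (p : ℝ × ℝ) (A B : Set (ℝ × ℝ)) : Prop :=
  IsClosed A ∧ IsClosed B ∧ A ∪ B = S ∧ A ∩ B = {p} ∧
    (A \ {p}).Nonempty ∧ (B \ {p}).Nonempty

lemma IsCut.symm {S : Set (ℝ × ℝ)} {p A B} (h : IsCut S p A B) : IsCut S p B A :=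
  ⟨h.2.1, h.1, by rw [Set.union_comm]; exact h.2.2.1,
    by rw [Set.inter_comm]; exact h.2.2.2.1, h.2.2.2.2.2, h.2.2.2.2.1⟩

lemma IsCut.p_mem_A {S : Set (ℝ × ℝ)} {p A B} (h : IsCut S p A B) : p ∈ A := by
  have : p ∈ A ∩ B := h.2.2.2.1 ▸ rfl
  exact this.1

lemma IsCut.p_mem_B {S : Set (ℝ × ℝ)} {p A B} (h : IsCut S p A B) : p ∈ B :=
  h.symm.p_mem_A

lemma IsCut.A_sub {S : Set (ℝ × ℝ)} {p A B} (h : IsCut S p A B) : A ⊆ S :=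
  h.2.2.1 ▸ Set.subset_union_left

lemma IsCut.B_sub {S : Set (ℝ × ℝ)} {p A B} (h : IsCut S p A B) : B ⊆ S :=
  h.2.2.1 ▸ Set.subset_union_right

lemma IsCut.p_mem_S {S : Set (ℝ × ℝ)} {p A B} (h : IsCut S p A B) : p ∈ S :=
  h.A_sub h.p_mem_A

lemma IsCut.mem_of_not_memA {S : Set (ℝ × ℝ)} {p A B x} (h : IsCut S p A B)
    (hx : x ∈ S) (hxA : x ∉ A) : x ∈ B := by
  have h' : x ∈ A ∪ B := h.2.2.1.symm ▸ hx
  rcases h' with h' | h'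
  · exact absurd h' hxA
  · exact h'

lemma IsCut.eq_of_memAB {S : Set (ℝ × ℝ)} {p A B x} (h : IsCut S p A B)
    (hxA : x ∈ A) (hxB : x ∈ B) : x = p := by
  have : x ∈ A ∩ B := ⟨hxA, hxB⟩
  rw [h.2.2.2.1] at this
  exact this

/-- A preconnected closed set covered by two disjoint closed sets lies in one of them. -/
lemma closed_partition {X u v : Set (ℝ × ℝ)} (hX : IsPreconnected X) (hXc : IsClosed X)
    (hu : IsClosed u) (hv : IsClosed v) (hcov : X ⊆ u ∪ v) (hd : Disjoint u v) :
    X ⊆ u ∨ X ⊆ v :=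
  (isPreconnected_iff_subset_of_fully_disjoint_closed hXc).1 hX u v hu hv hcov hd

/-- The sides of a cut of a preconnected closed set are preconnected. -/
lemma cut_side_preconn {X A B : Set (ℝ × ℝ)} {p : ℝ × ℝ}
    (hX : IsPreconnected X) (hXc : IsClosed X)
    (hA : IsClosed A) (hB : IsClosed B) (hun : A ∪ B = X) (hint : A ∩ B = {p}) :
    IsPreconnected A := by
  have hpA : p ∈ A := by have : p ∈ A ∩ B := hint ▸ rfl; exact this.1
  have hpB : p ∈ B := by have : p ∈ A ∩ B := hint ▸ rfl; exact this.2
  have hAX : A ⊆ X := hun ▸ Set.subset_union_left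
  have key : ∀ u v : Set (ℝ × ℝ), IsClosed u → IsClosed v → A ⊆ u ∪ v →
      Disjoint u v → p ∈ u → A ⊆ u := by
    intro u v hu hv hcov hduv hpu
    have hpv : p ∉ v := fun hpv => hduv.ne_of_mem hpu hpv rfl
    have h1 : X ⊆ ((A ∩ u) ∪ B) ∪ (A ∩ v) := by
      intro x hx
      rw [← hun] at hx
      rcases hx with hx | hx
      · rcases hcov hx with h' | h'
        · exact Or.inl (Or.inl ⟨hx, h'⟩)
        · exact Or.inr ⟨hx, h'⟩
      · exact Or.inl (Or.inr hx)
    have h2 : Disjoint ((A ∩ u) ∪ B) (A ∩ v) := by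
      rw [Set.disjoint_union_left]
      constructor
      · exact Set.disjoint_of_subset (Set.inter_subset_right) (Set.inter_subset_right) hduv
      · rw [Set.disjoint_left]
        intro x hxB hxAv
        have : x ∈ A ∩ B := ⟨hxAv.1, hxB⟩
        rw [hint] at this
        exact hpv (this ▸ hxAv.2)
    rcases closed_partition hX hXc (((hA.inter hu).union hB)) (hA.inter hv) h1 h2 with
      h' | h'
    · intro x hx
      rcases h' (hAX hx) with h'' | h''
      · exact h''.2
      · have : x ∈ A ∩ B := ⟨hx, h''⟩
        rw [hint] at this
        exact this ▸ hpu
    · exact absurd (h' (hAX hpA)).2 hpv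
  rw [isPreconnected_iff_subset_of_fully_disjoint_closed hA]
  intro u v hu hv hcov hduv
  rcases hcov hpA with hpu | hpv
  · exact Or.inl (key u v hu hv hcov hduv hpu)
  · exact Or.inr (key v u hv hu (by rwa [Set.union_comm]) hduv.symm hpv)

lemma IsCut.preconnA {S : Set (ℝ × ℝ)} {p A B} (hS : IsPreconnected S) (hSc : IsClosed S)
    (h : IsCut S p A B) : IsPreconnected A :=
  cut_side_preconn hS hSc h.1 h.2.1 h.2.2.1 h.2.2.2.1

lemma IsCut.preconnB {S : Set (ℝ × ℝ)} {p A B} (hS : IsPreconnected S) (hSc : IsClosed S)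
    (h : IsCut S p A B) : IsPreconnected B :=
  h.symm.preconnA hS hSc

/-- Nesting of cuts at distinct points (one half). -/
lemma nesting_half {S : Set (ℝ × ℝ)} {p q A B A' B'}
    (hS : IsPreconnected S) (hSc : IsClosed S)
    (h1 : IsCut S p A B) (h2 : IsCut S q A' B') (hpq : p ≠ q)
    (hq : q ∈ A) (hp : p ∈ A') : B ⊆ A' := by
  have hqB : q ∉ B := by
    intro hqB
    exact hpq (h1.eq_of_memAB hq hqB).symm
  have hcov : B ⊆ A' ∪ (B' ∩ B) := by
    intro x hx
    rcases (h2.2.2.1.symm ▸ (h1.B_sub hx) : x ∈ A' ∪ B') with h' | h'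
    · exact Or.inl h'
    · exact Or.inr ⟨h', hx⟩
  have hdisj : Disjoint A' (B' ∩ B) := by
    rw [Set.disjoint_left]
    intro x hxA' hxB'B
    exact hqB ((h2.eq_of_memAB hxA' hxB'B.1) ▸ hxB'B.2)
  rcases closed_partition (h1.preconnB hS hSc) h1.2.1 h2.1 (h2.2.1.inter h1.2.1)
      hcov hdisj with h' | h'
  · exact h'
  · exfalso
    have hpB : p ∈ B := h1.p_mem_B
    have := (h' hpB).1
    exact hpq (h2.eq_of_memAB hp this)

/-- Nesting of cuts at distinct points. -/
lemma nesting {S : Set (ℝ × ℝ)} {p q A B A' B'}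
    (hS : IsPreconnected S) (hSc : IsClosed S)
    (h1 : IsCut S p A B) (h2 : IsCut S q A' B') (hpq : p ≠ q)
    (hq : q ∈ A) (hp : p ∈ A') : B ⊆ A' ∧ B' ⊆ A :=
  ⟨nesting_half hS hSc h1 h2 hpq hq hp,
   nesting_half hS hSc h2 h1 hpq.symm hp hq⟩

/-! ### Chains -/

/-- A chain of mesh `< ε` filled by `S`. -/
structure GC (S : Set (ℝ × ℝ)) (ε : ℝ) where
  n : ℕ
  D : ℕ → MarkedPiece
  npos : 0 < n
  chain : IsChainOf n D
  fills : Fills S n D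
  small : ∀ i < n, Metric.diam (D i).carrier < ε

variable {S : Set (ℝ × ℝ)} {ε : ℝ}

/-- The `i`-th piece of a chain. -/
def GC.P (C : GC S ε) (i : ℕ) : Set (ℝ × ℝ) := (C.D i).carrier

lemma GC.compactP (C : GC S ε) (i : ℕ) : IsCompact (C.P i) := by
  obtain ⟨V, hV⟩ := (C.D i).polygon
  rw [GC.P, hV]
  exact V.finite_toSet.isCompact_convexHull (𝕜 := ℝ)

lemma GC.closedP (C : GC S ε) (i : ℕ) : IsClosed (C.P i) := (C.compactP i).isClosed

lemma GC.m1_mem (C : GC S ε) (i : ℕ) : (C.D i).m₁ ∈ C.P i :=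
  extremePoints_subset (C.D i).vertex₁

lemma GC.m2_mem (C : GC S ε) (i : ℕ) : (C.D i).m₂ ∈ C.P i :=
  extremePoints_subset (C.D i).vertex₂

lemma GC.m1_mem_S (C : GC S ε) {i : ℕ} (hi : i < C.n) : (C.D i).m₁ ∈ S :=
  (C.fills.2 i hi).1

lemma GC.m2_mem_S (C : GC S ε) {i : ℕ} (hi : i < C.n) : (C.D i).m₂ ∈ S :=
  (C.fills.2 i hi).2

lemma GC.cover (C : GC S ε) {x : ℝ × ℝ} (hx : x ∈ S) : ∃ i < C.n, x ∈ C.P i := by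
  have := C.fills.1 hx
  simp only [Finset.mem_range, Set.mem_iUnion] at this
  obtain ⟨i, hi, hmem⟩ := this
  exact ⟨i, hi, hmem⟩

lemma GC.exists_minidx (C : GC S ε) {x : ℝ × ℝ} (hx : x ∈ S) :
    ∃ i < C.n, x ∈ C.P i ∧ ∀ l < i, x ∉ C.P l := by
  classical
  obtain ⟨i0, hi0, hmem⟩ := C.cover hx
  have hex : ∃ i, x ∈ C.P i := ⟨i0, hmem⟩
  exact ⟨Nat.find hex, lt_of_le_of_lt (Nat.find_min' hex hmem) hi0, Nat.find_spec hex,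
    fun l hl => Nat.find_min hex hl⟩

lemma GC.disjP (C : GC S ε) {i j : ℕ} (hij : i + 2 ≤ j) (hj : j < C.n) :
    C.P i ∩ C.P j = ∅ := C.chain.2 i j hij hj

/-- Two pieces containing a common point have indices at distance `≤ 1`. -/
lemma GC.near (C : GC S ε) {i j : ℕ} {x : ℝ × ℝ} (hij : i ≤ j) (hj : j < C.n)
    (hxi : x ∈ C.P i) (hxj : x ∈ C.P j) : j ≤ i + 1 := by
  by_contra hc
  push_neg at hc
  have := C.disjP (i := i) (j := j) (by omega) hj
  have : x ∈ (∅ : Set (ℝ × ℝ)) := this ▸ ⟨hxi, hxj⟩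
  exact this

/-- The joint between pieces `i` and `i+1`. -/
noncomputable def GC.J (C : GC S ε) (i : ℕ) : ℝ × ℝ :=
  if h : i + 1 < C.n then (C.chain.1 i h).choose else 0

lemma GC.J_spec (C : GC S ε) {i : ℕ} (h : i + 1 < C.n) :
    C.P i ∩ C.P (i + 1) = {C.J i} ∧ IsMarkedOf (C.J i) (C.D i) ∧
      IsMarkedOf (C.J i) (C.D (i + 1)) := by
  rw [GC.J, dif_pos h]
  exact (C.chain.1 i h).choose_spec

lemma GC.J_mem_S (C : GC S ε) {i : ℕ} (h : i + 1 < C.n) : C.J i ∈ S := by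
  rcases (C.J_spec h).2.1 with h' | h'
  · exact h' ▸ C.m1_mem_S (by omega)
  · exact h' ▸ C.m2_mem_S (by omega)

lemma GC.J_mem_left (C : GC S ε) {i : ℕ} (h : i + 1 < C.n) : C.J i ∈ C.P i := by
  have : C.J i ∈ C.P i ∩ C.P (i + 1) := (C.J_spec h).1 ▸ rfl
  exact this.1

lemma GC.J_mem_right (C : GC S ε) {i : ℕ} (h : i + 1 < C.n) : C.J i ∈ C.P (i + 1) := by
  have : C.J i ∈ C.P i ∩ C.P (i + 1) := (C.J_spec h).1 ▸ rfl
  exact this.2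

lemma GC.dist_lt_in_piece (C : GC S ε) {i : ℕ} (hi : i < C.n) {x y : ℝ × ℝ}
    (hx : x ∈ C.P i) (hy : y ∈ C.P i) : dist x y < ε :=
  lt_of_le_of_lt (Metric.dist_le_diam_of_mem (C.compactP i).isBounded hx hy) (C.small i hi)

/-- Path bound: points in pieces `a` and `a+k` are at distance `< (k+1)ε`. -/
lemma GC.dist_lt (C : GC S ε) (k : ℕ) :
    ∀ a (x y : ℝ × ℝ), a + k < C.n → x ∈ C.P a → y ∈ C.P (a + k) →
      dist x y < ((k : ℝ) + 1) * ε := by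
  induction k with
  | zero =>
    intro a x y ha hx hy
    simpa using C.dist_lt_in_piece (by omega) hx hy
  | succ k ih =>
    intro a x y ha hx hy
    have hJ : C.J (a + k) ∈ C.P (a + k) := C.J_mem_left (by omega)
    have hJ' : C.J (a + k) ∈ C.P (a + k + 1) := C.J_mem_right (by omega)
    have h1 : dist x (C.J (a + k)) < ((k : ℝ) + 1) * ε := ih a x _ (by omega) hx hJ
    have h2 : dist (C.J (a + k)) y < ε := by
      have : a + (k + 1) = a + k + 1 := by omega
      exact C.dist_lt_in_piece (by omega) hJ' (this ▸ hy)
    calc dist x y ≤ dist x (C.J (a + k)) + dist (C.J (a + k)) y := dist_triangle _ _ _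
      _ < ((k : ℝ) + 1) * ε + ε := by linarith
      _ = ((k : ℝ) + 1 + 1) * ε := by ring
      _ = (((k + 1 : ℕ) : ℝ) + 1) * ε := by push_cast; ring

/-- If two points of `S` are at distance `≥ (m+1)ε` then their pieces are `> m` apart. -/
lemma GC.far_idx (C : GC S ε) {a b m : ℕ} {x y : ℝ × ℝ} (ha : a < C.n) (hb : b < C.n)
    (hx : x ∈ C.P a) (hy : y ∈ C.P b) (hd : ((m : ℝ) + 1) * ε ≤ dist x y) :
    a + m < b ∨ b + m < a := by
  by_contra hc
  push_neg at hc
  rcases le_total a b with hab | hab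
  · obtain ⟨k, rfl⟩ := Nat.exists_eq_add_of_le hab
    have hk : k ≤ m := by omega
    have hlt := C.dist_lt k a x y hb hx hy
    have hεpos : 0 < ε := by nlinarith [dist_nonneg (x := x) (y := y)]
    have hmono : ((k : ℝ) + 1) * ε ≤ ((m : ℝ) + 1) * ε := by
      have : (k : ℝ) ≤ (m : ℝ) := by exact_mod_cast hk
      nlinarith
    linarith
  · obtain ⟨k, rfl⟩ := Nat.exists_eq_add_of_le hab
    have hk : k ≤ m := by omega
    have hlt := C.dist_lt k b y x ha hy hx
    rw [dist_comm] at hlt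
    have hεpos : 0 < ε := by nlinarith [dist_nonneg (x := x) (y := y)]
    have hmono : ((k : ℝ) + 1) * ε ≤ ((m : ℝ) + 1) * ε := by
      have : (k : ℝ) ≤ (m : ℝ) := by exact_mod_cast hk
      nlinarith
    linarith

/-- Crossing lemma: a preconnected subset of `S` meeting pieces on both sides of
joint `j` contains the joint. -/
lemma GC.crossing (C : GC S ε) {T : Set (ℝ × ℝ)} (hT : IsPreconnected T) (hTS : T ⊆ S)
    {a b j : ℕ} {x y : ℝ × ℝ} (hb : b < C.n) (haj : a + 1 ≤ j) (hjb : j + 2 ≤ b)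
    (hx : x ∈ T) (hxa : x ∈ C.P a) (hy : y ∈ T) (hyb : y ∈ C.P b) : C.J j ∈ T := by
  classical
  by_contra hJ
  set U : Set (ℝ × ℝ) := ⋃ l ∈ Finset.range (j + 1), C.P l with hU
  set V : Set (ℝ × ℝ) := ⋃ l ∈ Finset.Ico (j + 1) C.n, C.P l with hV
  have hUc : IsClosed U := by
    apply Set.Finite.isClosed_biUnion (Finset.range (j + 1)).finite_toSet
    intro l _
    exact C.closedP l
  have hVc : IsClosed V := by
    apply Set.Finite.isClosed_biUnion (Finset.Ico (j + 1) C.n).finite_toSet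
    intro l _
    exact C.closedP l
  have hmemU : ∀ {l z}, l ≤ j → z ∈ C.P l → z ∈ U := by
    intro l z hl hz
    exact Set.mem_biUnion (Finset.mem_range.mpr (by omega)) hz
  have hmemV : ∀ {l z}, j + 1 ≤ l → l < C.n → z ∈ C.P l → z ∈ V := by
    intro l z hl hln hz
    exact Set.mem_biUnion (Finset.mem_Ico.mpr (by omega)) hz
  have hUV : ∀ z ∈ U ∩ V, z = C.J j := by
    rintro z ⟨hzU, hzV⟩
    simp only [hU, hV, Set.mem_iUnion, Finset.mem_range, Finset.mem_Ico,
      exists_prop] at hzU hzV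
    obtain ⟨l, hl, hzl⟩ := hzU
    obtain ⟨l', hl', hzl'⟩ := hzV
    have h1 : l ≤ l' := by omega
    have h2 : l' ≤ l + 1 := C.near h1 hl'.2 hzl hzl'
    have hlj : l = j := by omega
    have hl'j : l' = j + 1 := by omega
    rw [hlj] at hzl
    rw [hl'j] at hzl'
    have : z ∈ C.P j ∩ C.P (j + 1) := ⟨hzl, hzl'⟩
    rw [(C.J_spec (by omega)).1] at this
    exact this
  have hTcov : T ⊆ U ∪ V := by
    intro z hz
    obtain ⟨i, hi, hmem⟩ := C.cover (hTS hz)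
    rcases le_or_gt i j with h' | h'
    · exact Or.inl (hmemU h' hmem)
    · exact Or.inr (hmemV h' hi hmem)
  have hO : T ⊆ Vᶜ ∪ Uᶜ := by
    intro z hz
    by_contra hc
    simp only [Set.mem_union, Set.mem_compl_iff, not_or, not_not] at hc
    exact hJ ((hUV z ⟨hc.2, hc.1⟩) ▸ hz)
  have hxV : x ∉ V := by
    intro hxV
    simp only [hV, Set.mem_iUnion, Finset.mem_Ico, exists_prop] at hxV
    obtain ⟨l', hl', hzl'⟩ := hxV
    have := C.near (show a ≤ l' by omega) hl'.2 hxa hzl'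
    omega
  have hyU : y ∉ U := by
    intro hyU
    simp only [hU, Set.mem_iUnion, Finset.mem_range, exists_prop] at hyU
    obtain ⟨l, hl, hzl⟩ := hyU
    have := C.near (show l ≤ b by omega) hb hzl hyb
    omega
  obtain ⟨z, hzT, hz1, hz2⟩ :=
    hT Vᶜ Uᶜ hVc.isOpen_compl hUc.isOpen_compl hO ⟨x, hx, hxV⟩ ⟨y, hy, hyU⟩
  rcases hTcov hzT with h' | h'
  · exact hz2 h'
  · exact hz1 h'

/-! ### Chain cuts -/

/-- The part of `S` in pieces `0..j`. -/
def GC.lowC (C : GC S ε) (j : ℕ) : Set (ℝ × ℝ) :=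
  S ∩ ⋃ l ∈ Finset.range (j + 1), C.P l

/-- The part of `S` in pieces `j+1..n-1`. -/
def GC.highC (C : GC S ε) (j : ℕ) : Set (ℝ × ℝ) :=
  S ∩ ⋃ l ∈ Finset.Ico (j + 1) C.n, C.P l

lemma GC.mem_lowC (C : GC S ε) {j l : ℕ} {x : ℝ × ℝ} (hl : l ≤ j) (hx : x ∈ S)
    (hxl : x ∈ C.P l) : x ∈ C.lowC j :=
  ⟨hx, Set.mem_biUnion (Finset.mem_range.mpr (by omega)) hxl⟩

lemma GC.mem_highC (C : GC S ε) {j l : ℕ} {x : ℝ × ℝ} (hl : j + 1 ≤ l) (hln : l < C.n)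
    (hx : x ∈ S) (hxl : x ∈ C.P l) : x ∈ C.highC j :=
  ⟨hx, Set.mem_biUnion (Finset.mem_Ico.mpr (by omega)) hxl⟩

lemma GC.isCut (C : GC S ε) (hSc : IsClosed S) {j : ℕ} (hj : j + 1 < C.n) :
    IsCut S (C.J j) (C.lowC j) (C.highC j) := by
  have hJS := C.J_mem_S hj
  refine ⟨?_, ?_, ?_, ?_, ?_, ?_⟩
  · exact hSc.inter (Set.Finite.isClosed_biUnion (Finset.range (j + 1)).finite_toSet
      (fun l _ => C.closedP l))
  · exact hSc.inter (Set.Finite.isClosed_biUnion (Finset.Ico (j + 1) C.n).finite_toSet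
      (fun l _ => C.closedP l))
  · apply Set.Subset.antisymm
    · intro x hx
      rcases hx with ⟨hx, _⟩ | ⟨hx, _⟩ <;> exact hx
    · intro x hx
      obtain ⟨i, hi, hmem⟩ := C.cover hx
      rcases le_or_gt i j with h' | h'
      · exact Or.inl (C.mem_lowC h' hx hmem)
      · exact Or.inr (C.mem_highC h' hi hx hmem)
  · apply Set.Subset.antisymm
    · rintro z ⟨⟨hzS, hzU⟩, ⟨_, hzV⟩⟩
      simp only [Set.mem_iUnion, Finset.mem_range, Finset.mem_Ico, exists_prop]
        at hzU hzV
      obtain ⟨l, hl, hzl⟩ := hzU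
      obtain ⟨l', hl', hzl'⟩ := hzV
      have h1 : l ≤ l' := by omega
      have h2 : l' ≤ l + 1 := C.near h1 hl'.2 hzl hzl'
      have hlj : l = j := by omega
      have hl'j : l' = j + 1 := by omega
      rw [hlj] at hzl
      rw [hl'j] at hzl'
      have : z ∈ C.P j ∩ C.P (j + 1) := ⟨hzl, hzl'⟩
      rw [(C.J_spec hj).1] at this
      exact this
    · intro z hz
      rw [Set.mem_singleton_iff] at hz
      subst hz
      exact ⟨C.mem_lowC le_rfl hJS (C.J_mem_left hj),
        C.mem_highC le_rfl hj hJS (C.J_mem_right hj)⟩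
  · have hm1 : (C.D 0).m₁ ∈ C.lowC j :=
      C.mem_lowC (by omega) (C.m1_mem_S (by omega)) (C.m1_mem 0)
    have hm2 : (C.D 0).m₂ ∈ C.lowC j :=
      C.mem_lowC (by omega) (C.m2_mem_S (by omega)) (C.m2_mem 0)
    rcases eq_or_ne (C.D 0).m₁ (C.J j) with h' | h'
    · refine ⟨(C.D 0).m₂, hm2, ?_⟩
      simp only [Set.mem_singleton_iff, ← h']
      exact ((C.D 0).ne).symm
    · exact ⟨(C.D 0).m₁, hm1, h'⟩
  · have hn1 : C.n - 1 < C.n := by omega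
    have hj1 : j + 1 ≤ C.n - 1 := by omega
    have hm1 : (C.D (C.n - 1)).m₁ ∈ C.highC j :=
      C.mem_highC hj1 hn1 (C.m1_mem_S hn1) (C.m1_mem _)
    have hm2 : (C.D (C.n - 1)).m₂ ∈ C.highC j :=
      C.mem_highC hj1 hn1 (C.m2_mem_S hn1) (C.m2_mem _)
    rcases eq_or_ne (C.D (C.n - 1)).m₁ (C.J j) with h' | h'
    · refine ⟨(C.D (C.n - 1)).m₂, hm2, ?_⟩
      simp only [Set.mem_singleton_iff, ← h']
      exact ((C.D (C.n - 1)).ne).symm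
    · exact ⟨(C.D (C.n - 1)).m₁, hm1, h'⟩

lemma GC.mem_lowC_strict (C : GC S ε) {j l : ℕ} {x : ℝ × ℝ} (hj : j + 1 < C.n)
    (hl : l + 1 ≤ j) (hx : x ∈ S) (hxl : x ∈ C.P l) :
    x ∈ C.lowC j ∧ x ≠ C.J j := by
  refine ⟨C.mem_lowC (by omega) hx hxl, ?_⟩
  intro hxJ
  have hJ : x ∈ C.P (j + 1) := hxJ ▸ C.J_mem_right hj
  have := C.near (show l ≤ j + 1 by omega) hj hxl hJ
  omega

lemma GC.mem_highC_strict (C : GC S ε) {j l : ℕ} {x : ℝ × ℝ} (hj : j + 1 < C.n)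
    (hl : j + 2 ≤ l) (hln : l < C.n) (hx : x ∈ S) (hxl : x ∈ C.P l) :
    x ∈ C.highC j ∧ x ≠ C.J j := by
  refine ⟨C.mem_highC (by omega) hln hx hxl, ?_⟩
  intro hxJ
  have hJ : x ∈ C.P j := hxJ ▸ C.J_mem_left hj
  have := C.near (show j ≤ l by omega) hln hJ hxl
  omega

/-! ### Connectedness of `S` -/

lemma conn_helper {δ : ℝ} (C : GC S δ) {u v : Set (ℝ × ℝ)}
    (hcov : S ⊆ u ∪ v) (hd : Disjoint u v)
    (hdist : ∀ z ∈ S ∩ u, ∀ w ∈ S ∩ v, δ ≤ dist z w)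
    (hm : (C.D 0).m₁ ∈ u) : S ⊆ u := by
  have claim1 : ∀ i < C.n, ∀ z ∈ S, z ∈ C.P i → z ∈ u →
      ∀ w ∈ S, w ∈ C.P i → w ∈ u := by
    intro i hi z hzS hzP hzu w hwS hwP
    rcases hcov hwS with h' | h'
    · exact h'
    · exfalso
      have h1 := hdist z ⟨hzS, hzu⟩ w ⟨hwS, h'⟩
      have h2 := C.dist_lt_in_piece hi hzP hwP
      linarith
  have main : ∀ i, i < C.n → ∀ w ∈ S, w ∈ C.P i → w ∈ u := by
    intro i
    induction i with
    | zero =>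
      intro hi w hwS hwP
      exact claim1 0 hi _ (C.m1_mem_S hi) (C.m1_mem 0) hm w hwS hwP
    | succ i ih =>
      intro hi w hwS hwP
      have hJS := C.J_mem_S hi
      have hJu : C.J i ∈ u := ih (by omega) _ hJS (C.J_mem_left hi)
      exact claim1 (i + 1) hi _ hJS (C.J_mem_right hi) hJu w hwS hwP
  intro x hx
  obtain ⟨i, hi, hmem⟩ := C.cover hx
  exact main i hi x hx hmem

/-- `S` is preconnected. -/
lemma S_preconn (hS : IsCompact S) (hch : ∀ ε : ℝ, 0 < ε → Nonempty (GC S ε)) :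
    IsPreconnected S := by
  rw [isPreconnected_iff_subset_of_fully_disjoint_closed hS.isClosed]
  intro u v hu hv hcov hd
  by_contra hc
  push_neg at hc
  obtain ⟨hnu, hnv⟩ := hc
  obtain ⟨y₁, hy₁S, hy₁⟩ := Set.not_subset.1 hnu
  obtain ⟨x₁, hx₁S, hx₁⟩ := Set.not_subset.1 hnv
  have hy₁v : y₁ ∈ v := (hcov hy₁S).resolve_left hy₁
  have hx₁u : x₁ ∈ u := (hcov hx₁S).resolve_right hx₁
  set U : Set (ℝ × ℝ) := S ∩ u with hUdef
  set V : Set (ℝ × ℝ) := S ∩ v with hVdef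
  have hUcpt : IsCompact U := hS.inter_right hu
  have hVcpt : IsCompact V := hS.inter_right hv
  have hUne : U.Nonempty := ⟨x₁, hx₁S, hx₁u⟩
  have hVne : V.Nonempty := ⟨y₁, hy₁S, hy₁v⟩
  obtain ⟨⟨z₀, w₀⟩, hzw₀, hminp⟩ := (hUcpt.prod hVcpt).exists_isMinOn
    (hUne.prod hVne) ((continuous_fst.dist continuous_snd).continuousOn)
  set d : ℝ := dist z₀ w₀ with hddef
  have hdpos : 0 < d := by
    rw [hddef, dist_pos]
    intro hzw
    exact hd.ne_of_mem hzw₀.1.2 hzw₀.2.2 hzw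
  have hdist : ∀ z ∈ U, ∀ w ∈ V, d ≤ dist z w := by
    intro z hz w hw
    exact hminp (Set.mk_mem_prod hz hw)
  obtain ⟨C⟩ := hch d hdpos
  have hm0 : (C.D 0).m₁ ∈ S := C.m1_mem_S C.npos
  rcases hcov hm0 with h' | h'
  · have := conn_helper C hcov hd hdist h'
    exact hy₁ (hd.ne_of_mem (this hy₁S) hy₁v rfl).elim
  · have := conn_helper C (by rwa [Set.union_comm]) hd.symm
      (fun z hz w hw => by rw [dist_comm]; exact hdist w hw z hz) h'
    exact hx₁ (hd.symm.ne_of_mem (this hx₁S) hx₁u rfl).elim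

/-! ### The arm lemma -/

/-- A preconnected subset of `S` containing `p` and a far-away point contains
a joint adjacent to `p`'s minimal piece (on one side or the other). -/
lemma GC.arm (C : GC S ε) {T : Set (ℝ × ℝ)} (hT : IsPreconnected T) (hTS : T ⊆ S)
    {p x : ℝ × ℝ} (hp : p ∈ T) (hx : x ∈ T) {α : ℕ} (hα : α < C.n) (hpα : p ∈ C.P α)
    (hmin : ∀ l < α, p ∉ C.P l) (hd : ((3 : ℝ) + 1) * ε ≤ dist p x) :
    (α + 2 < C.n ∧ C.J (α + 1) ∈ T ∧ C.J (α + 1) ≠ p) ∨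
      (2 ≤ α ∧ C.J (α - 2) ∈ T ∧ C.J (α - 2) ≠ p) := by
  obtain ⟨l, hl, hxl, _⟩ := C.exists_minidx (hTS hx)
  have hfar : α + 3 < l ∨ l + 3 < α := by
    have := C.far_idx (m := 3) hα hl hpα hxl (by exact_mod_cast hd)
    omega
  rcases hfar with hfar | hfar
  · left
    have hJ : C.J (α + 1) ∈ T :=
      C.crossing hT hTS hl (by omega) (by omega) hp hpα hx hxl
    refine ⟨by omega, hJ, ?_⟩
    intro hJp
    have h1 : p ∈ C.P (α + 2) := hJp ▸ C.J_mem_right (by omega)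
    have := C.near (show α ≤ α + 2 by omega) (by omega) hpα h1
    omega
  · right
    have h2α : 2 ≤ α := by omega
    have hJ : C.J (α - 2) ∈ T :=
      C.crossing hT hTS hα (by omega) (by omega) hx hxl hp hpα
    refine ⟨h2α, hJ, ?_⟩
    intro hJp
    have h1 : p ∈ C.P (α - 2) := hJp ▸ C.J_mem_left (by omega)
    exact hmin (α - 2) (by omega) h1

/-! ### Two cuts at the same point -/

section SamePoint

/-- At most two of the four "quadrants" of two cuts at the same point are nontrivial. -/
lemma no_three_quadrants (hS : IsCompact S) (hch : ∀ ε : ℝ, 0 < ε → Nonempty (GC S ε))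
    {p : ℝ × ℝ} {A B A' B' : Set (ℝ × ℝ)}
    (hc1 : IsCut S p A B) (hc2 : IsCut S p A' B')
    {x₁ x₂ x₃ : ℝ × ℝ}
    (h1 : x₁ ∈ A ∩ A') (h1p : x₁ ≠ p)
    (h2 : x₂ ∈ A ∩ B') (h2p : x₂ ≠ p)
    (h3 : x₃ ∈ B ∩ A') (h3p : x₃ ≠ p) : False := by
  have hSp : IsPreconnected S := S_preconn hS hch
  have hSc : IsClosed S := hS.isClosed
  -- quadrants
  set Q1 : Set (ℝ × ℝ) := A ∩ A' with hQ1
  set Q2 : Set (ℝ × ℝ) := A ∩ B' with hQ2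
  set Q3 : Set (ℝ × ℝ) := B ∩ A' with hQ3
  have hpQ1 : p ∈ Q1 := ⟨hc1.p_mem_A, hc2.p_mem_A⟩
  have hpQ2 : p ∈ Q2 := ⟨hc1.p_mem_A, hc2.p_mem_B⟩
  have hpQ3 : p ∈ Q3 := ⟨hc1.p_mem_B, hc2.p_mem_A⟩
  have hAeq : Q1 ∪ Q2 = A := by
    rw [hQ1, hQ2, ← Set.inter_union_distrib_left, hc2.2.2.1]
    exact Set.inter_eq_left.mpr hc1.A_sub
  have hAint : Q1 ∩ Q2 = {p} := by
    rw [hQ1, hQ2, Set.inter_inter_inter_comm, Set.inter_self, hc2.2.2.2.1]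
    exact Set.inter_eq_right.mpr (Set.singleton_subset_iff.mpr hc1.p_mem_A)
  have hA'eq : Q1 ∪ Q3 = A' := by
    rw [hQ1, hQ3, Set.inter_comm A A', Set.inter_comm B A',
      ← Set.inter_union_distrib_left, hc1.2.2.1]
    exact Set.inter_eq_left.mpr hc2.A_sub
  have hA'int : Q1 ∩ Q3 = {p} := by
    rw [hQ1, hQ3, Set.inter_comm A A', Set.inter_comm B A',
      Set.inter_inter_inter_comm, Set.inter_self, hc1.2.2.2.1]
    exact Set.inter_eq_right.mpr (Set.singleton_subset_iff.mpr hc2.p_mem_A)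
  have hApre : IsPreconnected A := hc1.preconnA hSp hSc
  have hA'pre : IsPreconnected A' := hc2.preconnA hSp hSc
  have hAcl : IsClosed A := hc1.1
  have hA'cl : IsClosed A' := hc2.1
  have hQ1cl : IsClosed Q1 := hAcl.inter hA'cl
  have hQ2cl : IsClosed Q2 := hAcl.inter hc2.2.1
  have hQ3cl : IsClosed Q3 := hc1.2.1.inter hA'cl
  have hQ1pre : IsPreconnected Q1 :=
    cut_side_preconn (p := p) hApre hAcl hQ1cl hQ2cl hAeq hAint
  have hQ2pre : IsPreconnected Q2 := by
    refine cut_side_preconn (p := p) hApre hAcl hQ2cl hQ1cl ?_ ?_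
    · rw [Set.union_comm]; exact hAeq
    · rw [Set.inter_comm]; exact hAint
  have hQ3pre : IsPreconnected Q3 := by
    refine cut_side_preconn (p := p) hA'pre hA'cl hQ3cl hQ1cl ?_ ?_
    · rw [Set.union_comm]; exact hA'eq
    · rw [Set.inter_comm]; exact hA'int
  have hQ1S : Q1 ⊆ S := fun z hz => hc1.A_sub hz.1
  have hQ2S : Q2 ⊆ S := fun z hz => hc1.A_sub hz.1
  have hQ3S : Q3 ⊆ S := fun z hz => hc1.B_sub hz.1
  -- choose a fine chain
  set r : ℝ := min (min (dist p x₁) (dist p x₂)) (dist p x₃) with hrdef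
  have hrpos : 0 < r :=
    lt_min (lt_min (dist_pos.mpr h1p.symm) (dist_pos.mpr h2p.symm))
      (dist_pos.mpr h3p.symm)
  obtain ⟨C⟩ := hch (r / 5) (by positivity)
  obtain ⟨α, hα, hpα, hminα⟩ := C.exists_minidx hc1.p_mem_S
  have harm : ∀ (Q : Set (ℝ × ℝ)) (x : ℝ × ℝ), IsPreconnected Q → Q ⊆ S → p ∈ Q →
      x ∈ Q → r ≤ dist p x →
      (α + 2 < C.n ∧ C.J (α + 1) ∈ Q ∧ C.J (α + 1) ≠ p) ∨
        (2 ≤ α ∧ C.J (α - 2) ∈ Q ∧ C.J (α - 2) ≠ p) := by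
    intro Q x hQpre hQS hpQ hxQ hrd
    exact C.arm hQpre hQS hpQ hxQ hα hpα hminα (by linarith)
  have harm1 := harm Q1 x₁ hQ1pre hQ1S hpQ1 h1
    (le_trans (min_le_left _ _) (min_le_left _ _))
  have harm2 := harm Q2 x₂ hQ2pre hQ2S hpQ2 h2
    (le_trans (min_le_left _ _) (min_le_right _ _))
  have harm3 := harm Q3 x₃ hQ3pre hQ3S hpQ3 h3 (min_le_right _ _)
  -- pigeonhole
  have kill12 : ∀ z, z ∈ Q1 → z ∈ Q2 → z = p := by
    intro z hz1 hz2
    exact hc2.eq_of_memAB hz1.2 hz2.2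
  have kill13 : ∀ z, z ∈ Q1 → z ∈ Q3 → z = p := by
    intro z hz1 hz3
    exact hc1.eq_of_memAB hz1.1 hz3.1
  have kill23 : ∀ z, z ∈ Q2 → z ∈ Q3 → z = p := by
    intro z hz2 hz3
    exact hc1.eq_of_memAB hz2.1 hz3.1
  rcases harm1 with ⟨_, hJ1, hne1⟩ | ⟨_, hJ1, hne1⟩ <;>
    rcases harm2 with ⟨_, hJ2, hne2⟩ | ⟨_, hJ2, hne2⟩ <;>
      rcases harm3 with ⟨_, hJ3, hne3⟩ | ⟨_, hJ3, hne3⟩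
  · exact hne1 (kill12 _ hJ1 hJ2)
  · exact hne1 (kill12 _ hJ1 hJ2)
  · exact hne1 (kill13 _ hJ1 hJ3)
  · exact hne2 (kill23 _ hJ2 hJ3)
  · exact hne2 (kill23 _ hJ2 hJ3)
  · exact hne1 (kill13 _ hJ1 hJ3)
  · exact hne1 (kill12 _ hJ1 hJ2)
  · exact hne1 (kill12 _ hJ1 hJ2)

end SamePoint


/-- Uniqueness of cuts at a point: any two cuts of `S` at `p` induce the same
partition, up to swapping the two sides. -/
lemma cut_unique (hS : IsCompact S) (hch : ∀ ε : ℝ, 0 < ε → Nonempty (GC S ε))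
    {p : ℝ × ℝ} {A B A' B' : Set (ℝ × ℝ)}
    (hc1 : IsCut S p A B) (hc2 : IsCut S p A' B') :
    (A = A' ∧ B = B') ∨ (A = B' ∧ B = A') := by
  set t1 : Prop := ∃ z, z ∈ A ∩ A' ∧ z ≠ p with ht1
  set t2 : Prop := ∃ z, z ∈ A ∩ B' ∧ z ≠ p with ht2
  set t3 : Prop := ∃ z, z ∈ B ∩ A' ∧ z ≠ p with ht3
  set t4 : Prop := ∃ z, z ∈ B ∩ B' ∧ z ≠ p with ht4
  have k123 : t1 → t2 → t3 → False := by
    rintro ⟨z1, hz1, hz1p⟩ ⟨z2, hz2, hz2p⟩ ⟨z3, hz3, hz3p⟩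
    exact no_three_quadrants hS hch hc1 hc2 hz1 hz1p hz2 hz2p hz3 hz3p
  have k124 : t1 → t2 → t4 → False := by
    rintro ⟨z1, hz1, hz1p⟩ ⟨z2, hz2, hz2p⟩ ⟨z4, hz4, hz4p⟩
    exact no_three_quadrants hS hch hc1 hc2.symm ⟨hz2.1, hz2.2⟩ hz2p
      ⟨hz1.1, hz1.2⟩ hz1p ⟨hz4.1, hz4.2⟩ hz4p
  have k134 : t1 → t3 → t4 → False := by
    rintro ⟨z1, hz1, hz1p⟩ ⟨z3, hz3, hz3p⟩ ⟨z4, hz4, hz4p⟩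
    exact no_three_quadrants hS hch hc1.symm hc2 ⟨hz3.1, hz3.2⟩ hz3p
      ⟨hz4.1, hz4.2⟩ hz4p ⟨hz1.1, hz1.2⟩ hz1p
  have k234 : t2 → t3 → t4 → False := by
    rintro ⟨z2, hz2, hz2p⟩ ⟨z3, hz3, hz3p⟩ ⟨z4, hz4, hz4p⟩
    exact no_three_quadrants hS hch hc1.symm hc2.symm ⟨hz4.1, hz4.2⟩ hz4p
      ⟨hz3.1, hz3.2⟩ hz3p ⟨hz2.1, hz2.2⟩ hz2p
  have tA : t1 ∨ t2 := by
    obtain ⟨z, hzA, hzp⟩ := hc1.2.2.2.2.1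
    rw [Set.mem_singleton_iff] at hzp
    rcases hc2.2.2.1.symm ▸ (hc1.A_sub hzA) with h' | h'
    · exact Or.inl ⟨z, ⟨hzA, h'⟩, hzp⟩
    · exact Or.inr ⟨z, ⟨hzA, h'⟩, hzp⟩
  have tB : t3 ∨ t4 := by
    obtain ⟨z, hzB, hzp⟩ := hc1.2.2.2.2.2
    rw [Set.mem_singleton_iff] at hzp
    rcases hc2.2.2.1.symm ▸ (hc1.B_sub hzB) with h' | h'
    · exact Or.inl ⟨z, ⟨hzB, h'⟩, hzp⟩
    · exact Or.inr ⟨z, ⟨hzB, h'⟩, hzp⟩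
  have tA' : t1 ∨ t3 := by
    obtain ⟨z, hzA, hzp⟩ := hc2.2.2.2.2.1
    rw [Set.mem_singleton_iff] at hzp
    rcases hc1.2.2.1.symm ▸ (hc2.A_sub hzA) with h' | h'
    · exact Or.inl ⟨z, ⟨h', hzA⟩, hzp⟩
    · exact Or.inr ⟨z, ⟨h', hzA⟩, hzp⟩
  by_cases h1 : t1
  · rcases tB with h3 | h4
    · exfalso
      rcases tA with h1' | h2
      · rcases (show t2 ∨ t4 by
          obtain ⟨z, hzB, hzp⟩ := hc2.2.2.2.2.2
          rw [Set.mem_singleton_iff] at hzp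
          rcases hc1.2.2.1.symm ▸ (hc2.B_sub hzB) with h' | h'
          · exact Or.inl ⟨z, ⟨h', hzB⟩, hzp⟩
          · exact Or.inr ⟨z, ⟨h', hzB⟩, hzp⟩) with h2 | h4
        · exact k123 h1 h2 h3
        · exact k134 h1 h3 h4
      · exact k123 h1 h2 h3
    · -- t1 and t4 hold; t2, t3 fail
      have nt2 : ∀ z, z ∈ A ∩ B' → z = p := fun z hz => by
        by_contra hzp; exact k124 h1 ⟨z, hz, hzp⟩ h4
      have nt3 : ∀ z, z ∈ B ∩ A' → z = p := fun z hz => by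
        by_contra hzp; exact k134 h1 ⟨z, hz, hzp⟩ h4
      left
      constructor
      · apply Set.Subset.antisymm
        · intro z hz
          rcases hc2.2.2.1.symm ▸ (hc1.A_sub hz) with h' | h'
          · exact h'
          · exact (nt2 z ⟨hz, h'⟩) ▸ hc2.p_mem_A
        · intro z hz
          rcases hc1.2.2.1.symm ▸ (hc2.A_sub hz) with h' | h'
          · exact h'
          · exact (nt3 z ⟨h', hz⟩) ▸ hc1.p_mem_A
      · apply Set.Subset.antisymm
        · intro z hz
          rcases hc2.2.2.1.symm ▸ (hc1.B_sub hz) with h' | h'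
          · exact (nt3 z ⟨hz, h'⟩) ▸ hc2.p_mem_B
          · exact h'
        · intro z hz
          rcases hc1.2.2.1.symm ▸ (hc2.B_sub hz) with h' | h'
          · exact (nt2 z ⟨h', hz⟩) ▸ hc1.p_mem_B
          · exact h'
  · -- ¬t1; then t2 and t3 hold, t4 fails
    have h2 : t2 := tA.resolve_left h1
    have h3 : t3 := tA'.resolve_left h1
    have nt4 : ∀ z, z ∈ B ∩ B' → z = p := fun z hz => by
      by_contra hzp; exact k234 h2 h3 ⟨z, hz, hzp⟩
    have h1 : ∀ z, z ∈ A ∩ A' → z = p := fun z hz => by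
      by_contra hzp; exact h1 ⟨z, hz, hzp⟩
    right
    constructor
    · apply Set.Subset.antisymm
      · intro z hz
        rcases hc2.2.2.1.symm ▸ (hc1.A_sub hz) with h' | h'
        · exact (h1 z ⟨hz, h'⟩) ▸ hc2.p_mem_B
        · exact h'
      · intro z hz
        rcases hc1.2.2.1.symm ▸ (hc2.B_sub hz) with h' | h'
        · exact h'
        · exact (nt4 z ⟨h', hz⟩) ▸ hc1.p_mem_A
    · apply Set.Subset.antisymm
      · intro z hz
        rcases hc2.2.2.1.symm ▸ (hc1.B_sub hz) with h' | h'
        · exact h'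
        · exact (nt4 z ⟨hz, h'⟩) ▸ hc2.p_mem_A
      · intro z hz
        rcases hc1.2.2.1.symm ▸ (hc2.A_sub hz) with h' | h'
        · exact (h1 z ⟨h', hz⟩) ▸ hc1.p_mem_B
        · exact h'

/-! ### No triods -/

lemma NTmid {ε : ℝ} (C : GC S ε) {K Hv : Set (ℝ × ℝ)}
    (hK : IsPreconnected K) (hKS : K ⊆ S)
    (hHv : IsPreconnected Hv) (hHvS : Hv ⊆ S)
    {u v w v' : ℝ × ℝ} (hu : u ∈ K) (hw : w ∈ K) (hvH : v ∈ Hv) (hv' : v' ∈ Hv)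
    (hKH : ∀ z, z ∈ K → z ∈ Hv → z = v)
    {iu iv iw : ℕ} (hiw : iw < C.n) (hu' : u ∈ C.P iu) (hv2 : v ∈ C.P iv)
    (hminv : ∀ l < iv, v ∉ C.P l) (hw' : w ∈ C.P iw)
    (h1 : iu + 4 ≤ iv) (h2 : iv + 4 ≤ iw)
    (hd : ((3 : ℝ) + 1) * ε ≤ dist v v') : False := by
  rcases C.arm hHv hHvS hvH hv' (show iv < C.n by omega) hv2 hminv hd with
    ⟨_, hJ, hne⟩ | ⟨h2', hJ, hne⟩
  · have hJK : C.J (iv + 1) ∈ K :=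
      C.crossing hK hKS hiw (show iu + 1 ≤ iv + 1 by omega) (by omega) hu hu' hw hw'
    exact hne (hKH _ hJK hJ)
  · have hJK : C.J (iv - 2) ∈ K :=
      C.crossing hK hKS hiw (show iu + 1 ≤ iv - 2 by omega) (by omega) hu hu' hw hw'
    exact hne (hKH _ hJK hJ)

/-- No triods: three cuts cannot point pairwise away from each other. -/
lemma no_triod (hS : IsCompact S) (hch : ∀ ε : ℝ, 0 < ε → Nonempty (GC S ε))
    {a b c : ℝ × ℝ} {LA HA LB HB LCc HCc : Set (ℝ × ℝ)}
    (hab : a ≠ b) (hac : a ≠ c) (hbc : b ≠ c)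
    (ca : IsCut S a LA HA) (cb : IsCut S b LB HB) (cc : IsCut S c LCc HCc)
    (hAB : HA ⊆ LB) (hAC : HA ⊆ LCc) (hBA : HB ⊆ LA) (hBC : HB ⊆ LCc)
    (hCA : HCc ⊆ LA) (hCB : HCc ⊆ LB) : False := by
  have hSp : IsPreconnected S := S_preconn hS hch
  have hSc : IsClosed S := hS.isClosed
  set K : Set (ℝ × ℝ) := (LA ∩ LB) ∩ LCc with hKdef
  have haK : a ∈ K := ⟨⟨ca.p_mem_A, hAB ca.p_mem_B⟩, hAC ca.p_mem_B⟩
  have hbK : b ∈ K := ⟨⟨hBA cb.p_mem_B, cb.p_mem_A⟩, hBC cb.p_mem_B⟩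
  have hcK : c ∈ K := ⟨⟨hCA cc.p_mem_B, hCB cc.p_mem_B⟩, cc.p_mem_A⟩
  have hKS : K ⊆ S := fun z hz => ca.A_sub hz.1.1
  have hLApre : IsPreconnected LA := ca.preconnA hSp hSc
  have hHApre : IsPreconnected HA := ca.preconnB hSp hSc
  have hHBpre : IsPreconnected HB := cb.preconnB hSp hSc
  have hHCpre : IsPreconnected HCc := cc.preconnB hSp hSc
  have hLABcl : IsClosed (LA ∩ LB) := ca.1.inter cb.1
  have hKcl : IsClosed K := hLABcl.inter cc.1
  have hLABpre : IsPreconnected (LA ∩ LB) := by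
    refine cut_side_preconn (p := b) hLApre ca.1 hLABcl cb.2.1 ?_ ?_
    · apply Set.Subset.antisymm
      · exact Set.union_subset Set.inter_subset_left hBA
      · intro z hz
        rcases cb.2.2.1.symm ▸ (ca.A_sub hz) with h' | h'
        · exact Or.inl ⟨hz, h'⟩
        · exact Or.inr h'
    · rw [Set.inter_assoc, cb.2.2.2.1]
      exact Set.inter_eq_right.mpr (Set.singleton_subset_iff.mpr (hBA cb.p_mem_B))
  have hKpre : IsPreconnected K := by
    refine cut_side_preconn (p := c) hLABpre hLABcl hKcl cc.2.1 ?_ ?_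
    · apply Set.Subset.antisymm
      · exact Set.union_subset Set.inter_subset_left
          (Set.subset_inter hCA hCB)
      · intro z hz
        rcases cc.2.2.1.symm ▸ (ca.A_sub hz.1) with h' | h'
        · exact Or.inl ⟨hz, h'⟩
        · exact Or.inr h'
    · rw [Set.inter_assoc, cc.2.2.2.1]
      exact Set.inter_eq_right.mpr (Set.singleton_subset_iff.mpr
        ⟨hCA cc.p_mem_B, hCB cc.p_mem_B⟩)
  have hKA : ∀ z, z ∈ K → z ∈ HA → z = a := fun z hz hz' =>
    ca.eq_of_memAB hz.1.1 hz'
  have hKB : ∀ z, z ∈ K → z ∈ HB → z = b := fun z hz hz' =>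
    cb.eq_of_memAB hz.1.2 hz'
  have hKC : ∀ z, z ∈ K → z ∈ HCc → z = c := fun z hz hz' =>
    cc.eq_of_memAB hz.2 hz'
  obtain ⟨a', ha', hap⟩ := ca.2.2.2.2.2
  obtain ⟨b', hb', hbp⟩ := cb.2.2.2.2.2
  obtain ⟨c', hc', hcp⟩ := cc.2.2.2.2.2
  rw [Set.mem_singleton_iff] at hap hbp hcp
  set r : ℝ := min (min (min (dist a b) (dist a c)) (dist b c))
    (min (min (dist a a') (dist b b')) (dist c c')) with hrdef
  have hrpos : 0 < r := by
    refine lt_min (lt_min (lt_min ?_ ?_) ?_) (lt_min (lt_min ?_ ?_) ?_) <;>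
      rw [dist_pos]
    · exact hab
    · exact hac
    · exact hbc
    · exact fun h => hap h.symm
    · exact fun h => hbp h.symm
    · exact fun h => hcp h.symm
  obtain ⟨C⟩ := hch (r / 5) (by positivity)
  obtain ⟨ia, hia, hmema, hmina⟩ := C.exists_minidx ca.p_mem_S
  obtain ⟨ib, hib, hmemb, hminb⟩ := C.exists_minidx cb.p_mem_S
  obtain ⟨ic, hic, hmemc, hminc⟩ := C.exists_minidx cc.p_mem_S
  have hb4 : ∀ s t : ℝ, r ≤ s → ((3 : ℝ) + 1) * (r / 5) ≤ s := by
    intro s t hrs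
    linarith
  have fab : ia + 4 ≤ ib ∨ ib + 4 ≤ ia := by
    have := C.far_idx (m := 3) hia hib hmema hmemb
      (hb4 _ 0 (le_trans (min_le_left _ _) (le_trans (min_le_left _ _) (min_le_left _ _))))
    omega
  have fac : ia + 4 ≤ ic ∨ ic + 4 ≤ ia := by
    have := C.far_idx (m := 3) hia hic hmema hmemc
      (hb4 _ 0 (le_trans (min_le_left _ _) (le_trans (min_le_left _ _) (min_le_right _ _))))
    omega
  have fbc : ib + 4 ≤ ic ∨ ic + 4 ≤ ib := by
    have := C.far_idx (m := 3) hib hic hmemb hmemc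
      (hb4 _ 0 (le_trans (min_le_left _ _) (min_le_right _ _)))
    omega
  have hda : ((3 : ℝ) + 1) * (r / 5) ≤ dist a a' :=
    hb4 _ 0 (le_trans (min_le_right _ _) (le_trans (min_le_left _ _) (min_le_left _ _)))
  have hdb : ((3 : ℝ) + 1) * (r / 5) ≤ dist b b' :=
    hb4 _ 0 (le_trans (min_le_right _ _) (le_trans (min_le_left _ _) (min_le_right _ _)))
  have hdc : ((3 : ℝ) + 1) * (r / 5) ≤ dist c c' :=
    hb4 _ 0 (le_trans (min_le_right _ _) (min_le_right _ _))
  rcases fab with h1 | h1 <;> rcases fac with h2 | h2 <;> rcases fbc with h3 | h3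
  · -- ia < ib < ic : middle b
    exact NTmid C hKpre hKS hHBpre cb.B_sub haK hcK cb.p_mem_B hb' hKB
      hic hmema hmemb hminb hmemc h1 h3 hdb
  · -- ia < ib, ia < ic, ic < ib : middle c
    exact NTmid C hKpre hKS hHCpre cc.B_sub haK hbK cc.p_mem_B hc' hKC
      hib hmema hmemc hminc hmemb h2 h3 hdc
  · omega
  · -- ia < ib, ic < ia : middle a  (ic < ia < ib)
    exact NTmid C hKpre hKS hHApre ca.B_sub hcK hbK ca.p_mem_B ha' hKA
      hib hmemc hmema hmina hmemb h2 h1 hda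
  · -- ib < ia, ia < ic : middle a (ib < ia < ic)
    exact NTmid C hKpre hKS hHApre ca.B_sub hbK hcK ca.p_mem_B ha' hKA
      hic hmemb hmema hmina hmemc h1 h2 hda
  · omega
  · -- ib < ia, ic < ia, ib < ic : middle c (ib < ic < ia)
    exact NTmid C hKpre hKS hHCpre cc.B_sub hbK haK cc.p_mem_B hc' hKC
      hia hmemb hmemc hminc hmema h3 h2 hdc
  · -- ic < ib < ia : middle b
    exact NTmid C hKpre hKS hHBpre cb.B_sub hcK haK cb.p_mem_B hb' hKB
      hia hmemc hmemb hminb hmema h3 h1 hdb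

/-! ### The setting: a compact set filling chains at all scales, with two points -/

structure Setting where
  S : Set (ℝ × ℝ)
  hS : IsCompact S
  hch : ∀ ε : ℝ, 0 < ε → Nonempty (GC S ε)
  x₀ : ℝ × ℝ
  y₀ : ℝ × ℝ
  hx₀ : x₀ ∈ S
  hy₀ : y₀ ∈ S
  hne₀ : x₀ ≠ y₀

namespace Setting

variable (E : Setting)

lemma hSc : IsClosed E.S := E.hS.isClosed

/-- The chain at scale `1/(k+1)`. -/
noncomputable def chainK (k : ℕ) : GC E.S (1 / (k + 1)) :=
  (E.hch (1 / (k + 1)) (by positivity)).some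

/-- The countable set of joints of the chosen chains. -/
def Jpts : Set (ℝ × ℝ) :=
  {p | ∃ k j : ℕ, j + 1 < (E.chainK k).n ∧ p = (E.chainK k).J j}

lemma Jpts_countable : E.Jpts.Countable := by
  apply Set.Countable.mono _ (Set.countable_range
    (fun kj : ℕ × ℕ => (E.chainK kj.1).J kj.2))
  rintro p ⟨k, j, _, rfl⟩
  exact ⟨(k, j), rfl⟩

lemma Jpts_cut {p : ℝ × ℝ} (hp : p ∈ E.Jpts) : ∃ A B, IsCut E.S p A B := by
  obtain ⟨k, j, hj, rfl⟩ := hp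
  exact ⟨_, _, (E.chainK k).isCut E.hSc hj⟩

lemma Jpts_mem_S {p : ℝ × ℝ} (hp : p ∈ E.Jpts) : p ∈ E.S := by
  obtain ⟨A, B, hc⟩ := E.Jpts_cut hp
  exact hc.p_mem_S

/-- Separation of two points of `S` by a joint. -/
lemma sep {x y : ℝ × ℝ} (hx : x ∈ E.S) (hy : y ∈ E.S) (hxy : x ≠ y) :
    ∃ p ∈ E.Jpts, ∃ A B, IsCut E.S p A B ∧ (x ∈ A ∧ x ≠ p) ∧ (y ∈ B ∧ y ≠ p) := by
  have hd : 0 < dist x y := dist_pos.mpr hxy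
  obtain ⟨k, hk⟩ := exists_nat_gt (10 / dist x y)
  have hk0 : (0 : ℝ) < k := lt_trans (by positivity) hk
  have hmesh : (10 : ℝ) * (1 / (k + 1)) ≤ dist x y := by
    rw [div_lt_iff₀ hd] at hk
    have h1 : (10 : ℝ) ≤ dist x y * k := by linarith
    have h2 : (0 : ℝ) < k + 1 := by linarith
    rw [mul_one_div, div_le_iff₀ h2]
    nlinarith [dist_nonneg (x := x) (y := y)]
  set C := E.chainK k with hC
  obtain ⟨i, hi, hmemx, hminx⟩ := C.exists_minidx hx
  obtain ⟨j, hj, hmemy, hminy⟩ := C.exists_minidx hy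
  have hfar : i + 8 ≤ j ∨ j + 8 ≤ i := by
    have := C.far_idx (m := 9) hi hj hmemx hmemy (by push_cast; linarith)
    omega
  rcases hfar with hfar | hfar
  · refine ⟨C.J (i + 2), ⟨k, i + 2, show i + 2 + 1 < C.n by omega, rfl⟩, C.lowC (i + 2), C.highC (i + 2),
      C.isCut E.hSc (by omega), ?_, ?_⟩
    · exact C.mem_lowC_strict (by omega) (by omega) hx hmemx
    · exact C.mem_highC_strict (by omega) (by omega) hj hy hmemy
  · refine ⟨C.J (j + 2), ⟨k, j + 2, show j + 2 + 1 < C.n by omega, rfl⟩, C.highC (j + 2), C.lowC (j + 2),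
      (C.isCut E.hSc (by omega)).symm, ?_, ?_⟩
    · exact C.mem_highC_strict (by omega) (by omega) hi hx hmemx
    · exact C.mem_lowC_strict (by omega) (by omega) hy hmemy

/-- Separation of two points of `S` by two distinct joints. -/
lemma sep2 {x y : ℝ × ℝ} (hx : x ∈ E.S) (hy : y ∈ E.S) (hxy : x ≠ y) :
    ∃ p ∈ E.Jpts, ∃ q ∈ E.Jpts, p ≠ q ∧ ∃ A B A' B',
      IsCut E.S p A B ∧ IsCut E.S q A' B' ∧
      (x ∈ A ∧ x ≠ p) ∧ (y ∈ B ∧ y ≠ p) ∧ (x ∈ A' ∧ x ≠ q) ∧ (y ∈ B' ∧ y ≠ q) := by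
  have hd : 0 < dist x y := dist_pos.mpr hxy
  obtain ⟨k, hk⟩ := exists_nat_gt (12 / dist x y)
  have hk0 : (0 : ℝ) < k := lt_trans (by positivity) hk
  have hmesh : (12 : ℝ) * (1 / (k + 1)) ≤ dist x y := by
    rw [div_lt_iff₀ hd] at hk
    have h1 : (12 : ℝ) ≤ dist x y * k := by linarith
    have h2 : (0 : ℝ) < k + 1 := by linarith
    rw [mul_one_div, div_le_iff₀ h2]
    nlinarith [dist_nonneg (x := x) (y := y)]
  set C := E.chainK k with hC
  obtain ⟨i, hi, hmemx, hminx⟩ := C.exists_minidx hx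
  obtain ⟨j, hj, hmemy, hminy⟩ := C.exists_minidx hy
  have hfar : i + 10 ≤ j ∨ j + 10 ≤ i := by
    have := C.far_idx (m := 11) hi hj hmemx hmemy (by push_cast; linarith)
    omega
  have hJne : ∀ m : ℕ, m + 5 < C.n → C.J (m + 2) ≠ C.J (m + 4) := by
    intro m hm heq
    have h1 : C.J (m + 2) ∈ C.P (m + 2) := C.J_mem_left (by omega)
    have h2 : C.J (m + 2) ∈ C.P (m + 4) := heq ▸ C.J_mem_left (by omega)
    have := C.near (show m + 2 ≤ m + 4 by omega) (by omega) h1 h2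
    omega
  rcases hfar with hfar | hfar
  · obtain ⟨h1, h2⟩ := C.mem_lowC_strict (j := i + 2) (by omega) (by omega) hx hmemx
    obtain ⟨h3, h4⟩ := C.mem_lowC_strict (j := i + 4) (by omega) (by omega) hx hmemx
    obtain ⟨h5, h6⟩ := C.mem_highC_strict (j := i + 2) (by omega) (by omega) hj hy hmemy
    obtain ⟨h7, h8⟩ := C.mem_highC_strict (j := i + 4) (by omega) (by omega) hj hy hmemy
    exact ⟨C.J (i + 2), ⟨k, i + 2, show i + 2 + 1 < C.n by omega, rfl⟩, C.J (i + 4), ⟨k, i + 4, show i + 4 + 1 < C.n by omega, rfl⟩,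
      hJne i (by omega), C.lowC (i + 2), C.highC (i + 2), C.lowC (i + 4), C.highC (i + 4),
      C.isCut E.hSc (by omega), C.isCut E.hSc (by omega),
      ⟨h1, h2⟩, ⟨h5, h6⟩, ⟨h3, h4⟩, ⟨h7, h8⟩⟩
  · obtain ⟨h1, h2⟩ := C.mem_lowC_strict (j := j + 2) (by omega) (by omega) hy hmemy
    obtain ⟨h3, h4⟩ := C.mem_lowC_strict (j := j + 4) (by omega) (by omega) hy hmemy
    obtain ⟨h5, h6⟩ := C.mem_highC_strict (j := j + 2) (by omega) (by omega) hi hx hmemx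
    obtain ⟨h7, h8⟩ := C.mem_highC_strict (j := j + 4) (by omega) (by omega) hi hx hmemx
    exact ⟨C.J (j + 2), ⟨k, j + 2, show j + 2 + 1 < C.n by omega, rfl⟩, C.J (j + 4), ⟨k, j + 4, show j + 4 + 1 < C.n by omega, rfl⟩,
      hJne j (by omega), C.highC (j + 2), C.lowC (j + 2), C.highC (j + 4), C.lowC (j + 4),
      (C.isCut E.hSc (by omega)).symm, (C.isCut E.hSc (by omega)).symm,
      ⟨h5, h6⟩, ⟨h1, h2⟩, ⟨h7, h8⟩, ⟨h3, h4⟩⟩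

/-! ### Canonical oriented cuts -/

open scoped Classical in
/-- A canonical choice of cut at `p` (first side). -/
noncomputable def cutA (p : ℝ × ℝ) : Set (ℝ × ℝ) :=
  if h : ∃ A B, IsCut E.S p A B then h.choose else ∅

open scoped Classical in
/-- A canonical choice of cut at `p` (second side). -/
noncomputable def cutB (p : ℝ × ℝ) : Set (ℝ × ℝ) :=
  if h : ∃ A B, IsCut E.S p A B then h.choose_spec.choose else ∅

lemma cut_spec {p : ℝ × ℝ} (h : ∃ A B, IsCut E.S p A B) :
    IsCut E.S p (E.cutA p) (E.cutB p) := by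
  rw [cutA, cutB, dif_pos h, dif_pos h]
  exact h.choose_spec.choose_spec

/-- The anchor point. -/
noncomputable def p0 : ℝ × ℝ := (E.sep E.hx₀ E.hy₀ E.hne₀).choose

lemma p0_mem : E.p0 ∈ E.Jpts := (E.sep E.hx₀ E.hy₀ E.hne₀).choose_spec.1

lemma p0_cut : IsCut E.S E.p0 (E.cutA E.p0) (E.cutB E.p0) :=
  E.cut_spec (E.Jpts_cut E.p0_mem)

open scoped Classical in
/-- The "low" side of the canonical cut at `p`, oriented using the anchor. -/
noncomputable def lo (p : ℝ × ℝ) : Set (ℝ × ℝ) :=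
  if p = E.p0 then E.cutA E.p0
  else if p ∈ E.cutB E.p0 then
    (if E.p0 ∈ E.cutA p then E.cutA p else E.cutB p)
  else
    (if E.p0 ∈ E.cutA p then E.cutB p else E.cutA p)

open scoped Classical in
/-- The "high" side of the canonical cut at `p`. -/
noncomputable def hi (p : ℝ × ℝ) : Set (ℝ × ℝ) :=
  if p = E.p0 then E.cutB E.p0
  else if p ∈ E.cutB E.p0 then
    (if E.p0 ∈ E.cutA p then E.cutB p else E.cutA p)
  else
    (if E.p0 ∈ E.cutA p then E.cutA p else E.cutB p)

lemma lo_p0 : E.lo E.p0 = E.cutA E.p0 := by rw [lo, if_pos rfl]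

lemma hi_p0 : E.hi E.p0 = E.cutB E.p0 := by rw [hi, if_pos rfl]

lemma lo_hi_cut {p : ℝ × ℝ} (hp : p ∈ E.Jpts) : IsCut E.S p (E.lo p) (E.hi p) := by
  classical
  have hc := E.cut_spec (E.Jpts_cut hp)
  rw [lo, hi]
  rcases eq_or_ne p E.p0 with h0 | h0
  · rw [if_pos h0, if_pos h0]
    exact h0 ▸ E.p0_cut
  · rw [if_neg h0, if_neg h0]
    by_cases hB : p ∈ E.cutB E.p0 <;> by_cases hA : E.p0 ∈ E.cutA p <;>
      simp only [if_pos, if_neg, hB, hA, if_true, if_false] <;>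
      first
        | exact hc
        | exact hc.symm

lemma p0_mem_lo {p : ℝ × ℝ} (hp : p ∈ E.Jpts) (h0 : p ≠ E.p0)
    (hB : p ∈ E.cutB E.p0) : E.p0 ∈ E.lo p := by
  classical
  have hc := E.cut_spec (E.Jpts_cut hp)
  rw [lo, if_neg h0, if_pos hB]
  by_cases hA : E.p0 ∈ E.cutA p
  · rwa [if_pos hA]
  · rw [if_neg hA]
    exact hc.mem_of_not_memA E.p0_cut.p_mem_S hA

lemma p0_mem_hi {p : ℝ × ℝ} (hp : p ∈ E.Jpts) (h0 : p ≠ E.p0)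
    (hB : p ∉ E.cutB E.p0) : E.p0 ∈ E.hi p := by
  classical
  have hc := E.cut_spec (E.Jpts_cut hp)
  rw [hi, if_neg h0, if_neg hB]
  by_cases hA : E.p0 ∈ E.cutA p
  · rwa [if_pos hA]
  · rw [if_neg hA]
    exact hc.mem_of_not_memA E.p0_cut.p_mem_S hA

/-- Position of a cut relative to the anchor cut. -/
lemma anchor_pair {p : ℝ × ℝ} (hp : p ∈ E.Jpts) (h0 : p ≠ E.p0) :
    (E.cutA E.p0 ⊆ E.lo p ∧ E.hi p ⊆ E.cutB E.p0) ∨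
      (E.lo p ⊆ E.cutA E.p0 ∧ E.cutB E.p0 ⊆ E.hi p) := by
  have hSp : IsPreconnected E.S := S_preconn E.hS E.hch
  have hc := E.lo_hi_cut hp
  by_cases hB : p ∈ E.cutB E.p0
  · left
    exact nesting hSp E.hSc E.p0_cut.symm hc h0.symm hB (E.p0_mem_lo hp h0 hB)
  · right
    have hA : p ∈ E.cutA E.p0 :=
      E.p0_cut.symm.mem_of_not_memA hc.p_mem_S hB
    have := nesting hSp E.hSc E.p0_cut hc.symm h0.symm hA (E.p0_mem_hi hp h0 hB)
    exact ⟨this.2, this.1⟩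

/-- The master coherence lemma: the oriented cuts at joints are totally nested. -/
lemma CM {p q : ℝ × ℝ} (hp : p ∈ E.Jpts) (hq : q ∈ E.Jpts) (hne : p ≠ q) :
    (E.lo p ⊆ E.lo q ∧ E.hi q ⊆ E.hi p) ∨ (E.lo q ⊆ E.lo p ∧ E.hi p ⊆ E.hi q) := by
  have hSp : IsPreconnected E.S := S_preconn E.hS E.hch
  have hcp := E.lo_hi_cut hp
  have hcq := E.lo_hi_cut hq
  rcases eq_or_ne p E.p0 with hp0 | hp0
  · subst hp0
    rcases E.anchor_pair hq hne.symm with ⟨h1, h2⟩ | ⟨h1, h2⟩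
    · exact Or.inl ⟨E.lo_p0 ▸ h1, E.hi_p0 ▸ h2⟩
    · exact Or.inr ⟨E.lo_p0 ▸ h1, E.hi_p0 ▸ h2⟩
  rcases eq_or_ne q E.p0 with hq0 | hq0
  · subst hq0
    rcases E.anchor_pair hp hne with ⟨h1, h2⟩ | ⟨h1, h2⟩
    · exact Or.inr ⟨E.lo_p0 ▸ h1, E.hi_p0 ▸ h2⟩
    · exact Or.inl ⟨E.lo_p0 ▸ h1, E.hi_p0 ▸ h2⟩
  -- both differ from the anchor
  by_cases hqlo : q ∈ E.lo p
  · by_cases hplo : p ∈ E.lo q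
    · -- BAD1 : hi p ⊆ lo q ∧ hi q ⊆ lo p
      exfalso
      obtain ⟨hb1, hb2⟩ := nesting hSp E.hSc hcp hcq hne hqlo hplo
      rcases E.anchor_pair hp hp0 with ⟨ha1, ha2⟩ | ⟨ha1, ha2⟩ <;>
        rcases E.anchor_pair hq hq0 with ⟨hb1', hb2'⟩ | ⟨hb1', hb2'⟩
      · -- both above the anchor: triod
        exact no_triod E.hS E.hch (Ne.symm hp0) (Ne.symm hq0) hne
          E.p0_cut.symm hcp hcq ha1 hb1' ha2 hb1 hb2' hb2
      · -- p above, q below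
        have : E.hi p ⊆ {E.p0} := by
          intro z hz
          exact E.p0_cut.2.2.2.1 ▸ ⟨hb1' (hb1 hz), ha2 hz⟩
        exact hp0 (this hcp.p_mem_B)
      · -- p below, q above
        have : E.hi q ⊆ {E.p0} := by
          intro z hz
          exact E.p0_cut.2.2.2.1 ▸ ⟨ha1 (hb2 hz), hb2' hz⟩
        exact hq0 (this hcq.p_mem_B)
      · -- both below
        have : E.cutB E.p0 ⊆ {q} := by
          intro z hz
          exact hcq.2.2.2.1 ▸ ⟨hb1 (ha2 hz), hb2' hz⟩
        exact hq0 (this E.p0_cut.p_mem_B).symm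
    · -- q ∈ lo p, p ∈ hi q : right disjunct
      have hplo' : p ∈ E.hi q := hcq.mem_of_not_memA hcp.p_mem_S hplo
      obtain ⟨hb1, hb2⟩ := nesting hSp E.hSc hcp hcq.symm hne hqlo hplo'
      exact Or.inr ⟨hb2, hb1⟩
  · have hqhi : q ∈ E.hi p := hcp.mem_of_not_memA hcq.p_mem_S hqlo
    by_cases hplo : p ∈ E.lo q
    · -- q ∈ hi p, p ∈ lo q : left disjunct
      obtain ⟨hb1, hb2⟩ := nesting hSp E.hSc hcp.symm hcq hne hqhi hplo
      exact Or.inl ⟨hb1, hb2⟩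
    · -- BAD2 : lo p ⊆ hi q ∧ lo q ⊆ hi p
      exfalso
      have hplo' : p ∈ E.hi q := hcq.mem_of_not_memA hcp.p_mem_S hplo
      obtain ⟨hb1, hb2⟩ := nesting hSp E.hSc hcp.symm hcq.symm hne hqhi hplo'
      rcases E.anchor_pair hp hp0 with ⟨ha1, ha2⟩ | ⟨ha1, ha2⟩ <;>
        rcases E.anchor_pair hq hq0 with ⟨hb1', hb2'⟩ | ⟨hb1', hb2'⟩
      · -- both above : cutA p0 ⊆ {q}
        have : E.cutA E.p0 ⊆ {q} := by
          intro z hz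
          exact hcq.2.2.2.1 ▸ ⟨hb1' hz, hb1 (ha1 hz)⟩
        exact hq0 (this E.p0_cut.p_mem_A).symm
      · -- p above, q below : S ⊆ hi q
        have hScov : E.S ⊆ E.hi q := by
          intro z hz
          rcases E.p0_cut.2.2.1.symm ▸ hz with h' | h'
          · exact hb1 (ha1 h')
          · exact hb2' h'
        obtain ⟨z, hzlo, hzq⟩ := hcq.2.2.2.2.1
        rw [Set.mem_singleton_iff] at hzq
        exact hzq (hcq.eq_of_memAB hzlo (hScov (hcq.A_sub hzlo)))
      · -- p below, q above : S ⊆ hi p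
        have hScov : E.S ⊆ E.hi p := by
          intro z hz
          rcases E.p0_cut.2.2.1.symm ▸ hz with h' | h'
          · exact hb2 (hb1' h')
          · exact ha2 h'
        obtain ⟨z, hzlo, hzq⟩ := hcp.2.2.2.2.1
        rw [Set.mem_singleton_iff] at hzq
        exact hzq (hcp.eq_of_memAB hzlo (hScov (hcp.A_sub hzlo)))
      · -- both below : triod with arms lo p, lo q, cutB p0
        exact no_triod E.hS E.hch hne (Ne.symm hp0).symm (Ne.symm hq0).symm
          hcp.symm hcq.symm E.p0_cut hb1 ha1 hb2 hb1' ha2 hb2'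

/-! ### Order lemmas -/

lemma le_antisym' {p q : ℝ × ℝ} (hp : p ∈ E.Jpts) (hq : q ∈ E.Jpts)
    (h1 : E.lo p ⊆ E.lo q) (h2 : E.lo q ⊆ E.lo p) : p = q := by
  by_contra hne
  have hcp := E.lo_hi_cut hp
  have hcq := E.lo_hi_cut hq
  have hqp : q ∉ E.hi p := by
    intro hqhi
    exact hne (hcp.eq_of_memAB (h2 hcq.p_mem_A) hqhi).symm
  have hpq : p ∉ E.hi q := by
    intro hphi
    exact hne (hcq.eq_of_memAB (h1 hcp.p_mem_A) hphi)
  rcases E.CM hp hq hne with ⟨_, hD⟩ | ⟨_, hD⟩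
  · exact hqp (hD hcq.p_mem_B)
  · exact hpq (hD hcp.p_mem_B)

/-- If `p` lies strictly on the low side of `q` then the cut at `p` is below the
cut at `q`. -/
lemma ord_of_mem_lo {p q : ℝ × ℝ} (hp : p ∈ E.Jpts) (hq : q ∈ E.Jpts)
    (h : p ∈ E.lo q) (hpq : p ≠ q) : E.lo p ⊆ E.lo q ∧ E.hi q ⊆ E.hi p := by
  have hcp := E.lo_hi_cut hp
  have hcq := E.lo_hi_cut hq
  rcases E.CM hp hq hpq with hD | ⟨_, hD⟩
  · exact hD
  · exact absurd (hcq.eq_of_memAB h (hD hcp.p_mem_B)) hpq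

lemma ord_of_mem_hi {p q : ℝ × ℝ} (hp : p ∈ E.Jpts) (hq : q ∈ E.Jpts)
    (h : q ∈ E.hi p) (hpq : p ≠ q) : E.lo p ⊆ E.lo q ∧ E.hi q ⊆ E.hi p := by
  have hcp := E.lo_hi_cut hp
  have hcq := E.lo_hi_cut hq
  rcases E.CM hp hq hpq with hD | ⟨hD, _⟩
  · exact hD
  · exact absurd (hcp.eq_of_memAB (hD hcq.p_mem_A) h).symm hpq

/-- If some point of `S` is strictly above the cut at `p` and strictly below the
cut at `q`, then `p < q`. -/
lemma below_trans {p q x : ℝ × ℝ} (hp : p ∈ E.Jpts) (hq : q ∈ E.Jpts)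
    (h1 : x ∈ E.hi p) (h1' : x ≠ p) (h2 : x ∈ E.lo q) (h2' : x ≠ q) :
    p ≠ q ∧ E.lo p ⊆ E.lo q ∧ E.hi q ⊆ E.hi p := by
  have hcp := E.lo_hi_cut hp
  have hcq := E.lo_hi_cut hq
  have hpq : p ≠ q := by
    rintro rfl
    exact h1' (hcp.eq_of_memAB h2 h1)
  refine ⟨hpq, ?_⟩
  rcases E.CM hp hq hpq with hD | ⟨_, hD⟩
  · exact hD
  · exact absurd (hcq.eq_of_memAB h2 (hD h1)) h2'

/-- Strict-order side facts. -/
lemma mem_sides_of_lt {p q : ℝ × ℝ} (hp : p ∈ E.Jpts) (hq : q ∈ E.Jpts)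
    (hne : p ≠ q) (h : E.lo p ⊆ E.lo q) :
    (q ∈ E.hi p ∧ q ≠ p) ∧ (p ∈ E.lo q ∧ p ≠ q) := by
  have hcp := E.lo_hi_cut hp
  have hcq := E.lo_hi_cut hq
  have hD : E.hi q ⊆ E.hi p := by
    rcases E.CM hp hq hne with ⟨_, hD⟩ | ⟨hD', _⟩
    · exact hD
    · exact absurd (E.le_antisym' hp hq h hD') hne
  exact ⟨⟨hD hcq.p_mem_B, hne.symm⟩, ⟨h hcp.p_mem_A, hne⟩⟩

/-! ### The linear order on joints -/

/-- The type of joints. -/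
def JT : Type := {p : ℝ × ℝ // p ∈ E.Jpts}

/-- The underlying point of a joint. -/
def JT.pt {E : Setting} (a : E.JT) : ℝ × ℝ := a.1

lemma JT.mem {E : Setting} (a : E.JT) : a.pt ∈ E.Jpts := a.2

lemma JT.ext' {E : Setting} {a b : E.JT} (h : a.pt = b.pt) : a = b :=
  Subtype.ext h

/-- The strict order relation on joints. -/
def Jlt {E : Setting} (a b : E.JT) : Prop := a.pt ≠ b.pt ∧ E.lo a.pt ⊆ E.lo b.pt

lemma Jlt_trichot {E : Setting} (a b : E.JT) : Jlt a b ∨ a = b ∨ Jlt b a := by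
  rcases eq_or_ne a.pt b.pt with h | h
  · exact Or.inr (Or.inl (JT.ext' h))
  · rcases E.CM a.mem b.mem h with ⟨hD, _⟩ | ⟨hD, _⟩
    · exact Or.inl ⟨h, hD⟩
    · exact Or.inr (Or.inr ⟨h.symm, hD⟩)

lemma Jlt_irrefl {E : Setting} (a : E.JT) : ¬ Jlt a a := fun h => h.1 rfl

lemma Jlt_trans {E : Setting} {a b c : E.JT} (h1 : Jlt a b) (h2 : Jlt b c) :
    Jlt a c := by
  refine ⟨?_, h1.2.trans h2.2⟩
  intro hac
  exact h1.1 (E.le_antisym' a.mem b.mem h1.2 (hac ▸ h2.2))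

noncomputable instance : LinearOrder E.JT := by
  letI : DecidableRel (α := E.JT) Jlt := fun _ _ => Classical.dec _
  haveI : IsTrichotomous E.JT Jlt := ⟨fun a b h1 h2 => by rcases Jlt_trichot a b with h | h | h <;> tauto⟩
  haveI : IsIrrefl E.JT Jlt := ⟨Jlt_irrefl⟩
  haveI : IsTrans E.JT Jlt := ⟨fun _ _ _ => Jlt_trans⟩
  haveI : IsStrictOrder E.JT Jlt := {}
  haveI : IsStrictTotalOrder E.JT Jlt := {}
  exact linearOrderOfSTO Jlt

lemma JT.lt_iff {E : Setting} {a b : E.JT} : a < b ↔ Jlt a b := Iff.rfl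

lemma JT.lt_iff' {E : Setting} {a b : E.JT} :
    a < b ↔ a.pt ≠ b.pt ∧ E.lo a.pt ⊆ E.lo b.pt := Iff.rfl

instance : Nonempty E.JT := ⟨⟨E.p0, E.p0_mem⟩⟩

instance : Countable E.JT := E.Jpts_countable.to_subtype

instance : DenselyOrdered E.JT := by
  constructor
  intro a b hab
  rw [JT.lt_iff'] at hab
  obtain ⟨hne, hsub⟩ := hab
  obtain ⟨r, hr, A, B, hcut, ⟨haA, haR⟩, ⟨hbB, hbR⟩⟩ :=
    E.sep (E.Jpts_mem_S a.mem) (E.Jpts_mem_S b.mem) hne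
  have hcr := E.lo_hi_cut hr
  rcases cut_unique E.hS E.hch hcr hcut with ⟨hA, hB⟩ | ⟨hA, hB⟩
  · -- lo r = A, hi r = B
    refine ⟨⟨r, hr⟩, ?_, ?_⟩
    · exact JT.lt_iff'.mpr ⟨haR, (E.ord_of_mem_lo a.mem hr (hA ▸ haA) haR).1⟩
    · exact JT.lt_iff'.mpr ⟨Ne.symm hbR,
        (E.ord_of_mem_hi hr b.mem (hB ▸ hbB) (Ne.symm hbR)).1⟩
  · -- lo r = B, hi r = A
    exfalso
    have h1 : E.lo r ⊆ E.lo a.pt :=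
      (E.ord_of_mem_hi hr a.mem (hB ▸ haA) (Ne.symm haR)).1
    have h2 : E.lo b.pt ⊆ E.lo r :=
      (E.ord_of_mem_lo b.mem hr (hA ▸ hbB) hbR).1
    exact haR (E.le_antisym' a.mem hr (hsub.trans h2) h1)

instance : NoMaxOrder E.JT := by
  constructor
  intro a
  obtain ⟨z, hz, hzne⟩ := (E.lo_hi_cut a.mem).2.2.2.2.2
  rw [Set.mem_singleton_iff] at hzne
  have hzS : z ∈ E.S := (E.lo_hi_cut a.mem).B_sub hz
  obtain ⟨r, hr, A, B, hcut, ⟨haA, haR⟩, ⟨hzB, hzR⟩⟩ :=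
    E.sep (E.Jpts_mem_S a.mem) hzS (Ne.symm hzne)
  have hcr := E.lo_hi_cut hr
  rcases cut_unique E.hS E.hch hcr hcut with ⟨hA, hB⟩ | ⟨hA, hB⟩
  · exact ⟨⟨r, hr⟩, JT.lt_iff'.mpr
      ⟨haR, (E.ord_of_mem_lo a.mem hr (hA ▸ haA) haR).1⟩⟩
  · exfalso
    have hD := E.ord_of_mem_hi hr a.mem (hB ▸ haA) (Ne.symm haR)
    exact hzne ((E.lo_hi_cut a.mem).eq_of_memAB (hD.1 (hA ▸ hzB)) hz)

instance : NoMinOrder E.JT := by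
  constructor
  intro a
  obtain ⟨z, hz, hzne⟩ := (E.lo_hi_cut a.mem).2.2.2.2.1
  rw [Set.mem_singleton_iff] at hzne
  have hzS : z ∈ E.S := (E.lo_hi_cut a.mem).A_sub hz
  obtain ⟨r, hr, A, B, hcut, ⟨hzA, hzR⟩, ⟨haB, haR⟩⟩ :=
    E.sep hzS (E.Jpts_mem_S a.mem) hzne
  have hcr := E.lo_hi_cut hr
  rcases cut_unique E.hS E.hch hcr hcut with ⟨hA, hB⟩ | ⟨hA, hB⟩
  · exact ⟨⟨r, hr⟩, JT.lt_iff'.mpr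
      ⟨Ne.symm haR, (E.ord_of_mem_hi hr a.mem (hB ▸ haB) (Ne.symm haR)).1⟩⟩
  · exfalso
    have hD := E.ord_of_mem_lo a.mem hr (hA ▸ haB) haR
    exact hzne ((E.lo_hi_cut a.mem).eq_of_memAB hz (hD.2 (hB ▸ hzA)))

/-- The order isomorphism with `ℚ`. -/
noncomputable def theta : E.JT ≃o ℚ := (Order.iso_of_countable_dense E.JT ℚ).some

/-! ### The embedding function -/

/-- The real value attached to a joint. -/
noncomputable def val (a : E.JT) : ℝ := Real.arctan (E.theta a)

lemma val_lt_val {a b : E.JT} (h : a < b) : E.val a < E.val b :=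
  Real.arctan_strictMono (by exact_mod_cast E.theta.lt_iff_lt.mpr h)

lemma val_lt_pi2 (a : E.JT) : E.val a < Real.pi / 2 := Real.arctan_lt_pi_div_two _

lemma neg_pi2_lt_val (a : E.JT) : -(Real.pi / 2) < E.val a :=
  Real.neg_pi_div_two_lt_arctan _

/-- Joints strictly below a point `x` of `S`. -/
def Below (x : ℝ × ℝ) : Set E.JT := {a | x ∈ E.hi a.pt ∧ x ≠ a.pt}

/-- Joints strictly above a point `x` of `S`. -/
def AboveJ (x : ℝ × ℝ) : Set E.JT := {a | x ∈ E.lo a.pt ∧ x ≠ a.pt}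

/-- The embedding function. -/
noncomputable def Fval (x : ℝ × ℝ) : ℝ :=
  sSup (insert (-(Real.pi / 2)) (E.val '' E.Below x))

lemma Fval_bdd (x : ℝ × ℝ) :
    BddAbove (insert (-(Real.pi / 2)) (E.val '' E.Below x)) := by
  refine ⟨Real.pi / 2, ?_⟩
  rintro t (rfl | ⟨a, _, rfl⟩)
  · have := Real.pi_pos
    linarith
  · exact le_of_lt (E.val_lt_pi2 a)

lemma Fval_ge (x : ℝ × ℝ) : -(Real.pi / 2) ≤ E.Fval x :=
  le_csSup (E.Fval_bdd x) (Set.mem_insert _ _)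

lemma le_Fval_of_below {x : ℝ × ℝ} {a : E.JT} (ha : a ∈ E.Below x) :
    E.val a ≤ E.Fval x :=
  le_csSup (E.Fval_bdd x) (Set.mem_insert_of_mem _ ⟨a, ha, rfl⟩)

lemma lt_of_below_above {x : ℝ × ℝ} {a b : E.JT} (ha : a ∈ E.Below x)
    (hb : b ∈ E.AboveJ x) : a < b := by
  obtain ⟨hne, hsub⟩ := E.below_trans a.mem b.mem ha.1 ha.2 hb.1 hb.2
  exact JT.lt_iff'.mpr ⟨hne, hsub.1⟩

lemma Fval_le_of_above {x : ℝ × ℝ} {b : E.JT} (hb : b ∈ E.AboveJ x) :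
    E.Fval x ≤ E.val b := by
  apply csSup_le ⟨_, Set.mem_insert _ _⟩
  rintro t (rfl | ⟨a, ha, rfl⟩)
  · exact le_of_lt (E.neg_pi2_lt_val b)
  · exact le_of_lt (E.val_lt_val (E.lt_of_below_above ha hb))

/-- Rationals have arctan values densely in `(-π/2, π/2)`. -/
lemma arctan_rat_dense {u v : ℝ} (h1 : -(Real.pi / 2) ≤ u) (h2 : u < v)
    (h3 : u < Real.pi / 2) : ∃ q : ℚ, u < Real.arctan q ∧ Real.arctan q < v := by
  set w : ℝ := min v (Real.pi / 2) with hw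
  have huw : u < w := lt_min h2 h3
  set m : ℝ := (u + w) / 2 with hm
  set m₁ : ℝ := (u + m) / 2 with hm₁
  set m₂ : ℝ := (m + w) / 2 with hm₂
  have hwle : w ≤ Real.pi / 2 := min_le_right _ _
  have h₁ : -(Real.pi / 2) < m₁ := by
    have : u < m := by rw [hm]; linarith
    have : u < m₁ := by rw [hm₁]; linarith
    linarith
  have h₂ : m₂ < Real.pi / 2 := by
    have hmw : m < w := by rw [hm]; linarith
    have : m₂ < w := by rw [hm₂]; linarith
    linarith
  have h₁₂ : m₁ < m₂ := by
    have hum : u < m := by rw [hm]; linarith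
    have hmw : m < w := by rw [hm]; linarith
    rw [hm₁, hm₂]; linarith
  have htan : Real.tan m₁ < Real.tan m₂ :=
    Real.tan_lt_tan_of_lt_of_lt_pi_div_two h₁ h₂ h₁₂
  obtain ⟨q, hq1, hq2⟩ := exists_rat_btwn htan
  refine ⟨q, ?_, ?_⟩
  · have : m₁ < Real.arctan q := by
      rw [← Real.arctan_tan h₁ (lt_trans h₁₂ h₂)]
      exact Real.arctan_strictMono hq1
    have hum : u < m := by rw [hm]; linarith
    have : u < m₁ := by rw [hm₁]; linarith
    linarith
  · have harc : Real.arctan q < m₂ := by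
      rw [← Real.arctan_tan (lt_trans h₁ h₁₂) h₂]
      exact Real.arctan_strictMono hq2
    have hmw : m < w := by rw [hm]; linarith
    have hm₂w : m₂ < w := by rw [hm₂]; linarith
    have hwv : w ≤ v := min_le_left _ _
    linarith

/-- Approximation of `arctan` from below along rationals. -/
lemma arctan_approx_below (t : ℝ) {η : ℝ} (hη : 0 < η) :
    ∃ q : ℚ, (q : ℝ) < t ∧ Real.arctan t - η < Real.arctan q := by
  obtain ⟨δ, hδ, hcont⟩ := Metric.continuousAt_iff.1 Real.continuous_arctan.continuousAt η hη
  obtain ⟨q, hq1, hq2⟩ := exists_rat_btwn (show t - δ < t by linarith)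
  refine ⟨q, hq2, ?_⟩
  have : dist (q : ℝ) t < δ := by
    rw [Real.dist_eq, abs_lt]
    constructor <;> linarith
  have := hcont this
  rw [Real.dist_eq, abs_lt] at this
  linarith

lemma theta_symm_val (q : ℚ) : E.val (E.theta.symm q) = Real.arctan q := by
  rw [val, E.theta.apply_symm_apply]

/-- At a joint `x`, the value of the joint is at most `Fval x`. -/
lemma val_le_Fval {x : ℝ × ℝ} (hx : x ∈ E.Jpts) : E.val ⟨x, hx⟩ ≤ E.Fval x := by
  set t : ℚ := E.theta ⟨x, hx⟩ with ht
  have key : ∀ s : ℚ, s < t → Real.arctan s ≤ E.Fval x := by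
    intro s hs
    have hlt : E.theta.symm s < (⟨x, hx⟩ : E.JT) := by
      rw [← E.theta.symm_apply_apply ⟨x, hx⟩, ← ht]
      exact E.theta.symm.strictMono hs
    obtain ⟨hside, _⟩ := E.mem_sides_of_lt (E.theta.symm s).mem hx
      (JT.lt_iff'.mp hlt).1 (JT.lt_iff'.mp hlt).2
    have hbel : E.theta.symm s ∈ E.Below x := ⟨hside.1, hside.2⟩
    have := E.le_Fval_of_below hbel
    rwa [theta_symm_val] at this
  have : ∀ η : ℝ, 0 < η → E.val ⟨x, hx⟩ - η ≤ E.Fval x := by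
    intro η hη
    obtain ⟨q, hq1, hq2⟩ := arctan_approx_below (t : ℝ) hη
    have hqt : q < t := by exact_mod_cast hq1
    have := key q hqt
    rw [show E.val ⟨x, hx⟩ = Real.arctan (t : ℝ) from rfl]
    linarith
  by_contra hc
  push_neg at hc
  have := this ((E.val ⟨x, hx⟩ - E.Fval x) / 2) (by linarith)
  linarith


/-- Lower semicontinuity estimate. -/
lemma Fval_lower {x : ℝ × ℝ} (hx : x ∈ E.S) {η : ℝ} (hη : 0 < η) :
    ∃ O : Set (ℝ × ℝ), IsOpen O ∧ x ∈ O ∧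
      ∀ y ∈ E.S ∩ O, E.Fval x - η < E.Fval y := by
  have hlt : E.Fval x - η < E.Fval x := by linarith
  obtain ⟨t, ht, htlt⟩ := exists_lt_of_lt_csSup ⟨_, Set.mem_insert _ _⟩ hlt
  rcases ht with rfl | ⟨a, ha, rfl⟩
  · refine ⟨Set.univ, isOpen_univ, trivial, fun y _ => ?_⟩
    have := E.Fval_ge y
    linarith
  · have hcut := E.lo_hi_cut a.mem
    refine ⟨(E.lo a.pt)ᶜ, hcut.1.isOpen_compl, ?_, ?_⟩
    · intro hxlo
      exact ha.2 (hcut.eq_of_memAB hxlo ha.1)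
    · rintro y ⟨hyS, hyO⟩
      have hyhi : y ∈ E.hi a.pt := hcut.mem_of_not_memA hyS hyO
      have hyne : y ≠ a.pt := fun h => hyO (h ▸ hcut.p_mem_A)
      have := E.le_Fval_of_below (show a ∈ E.Below y from ⟨hyhi, hyne⟩)
      linarith

/-- Upper semicontinuity estimate. -/
lemma Fval_upper {x : ℝ × ℝ} (hx : x ∈ E.S) {η : ℝ} (hη : 0 < η) :
    ∃ O : Set (ℝ × ℝ), IsOpen O ∧ x ∈ O ∧
      ∀ y ∈ E.S ∩ O, E.Fval y < E.Fval x + η := by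
  by_cases hc1 : ∃ r ∈ E.AboveJ x, E.val r < E.Fval x + η
  · obtain ⟨r, hr, hrv⟩ := hc1
    have hcut := E.lo_hi_cut r.mem
    refine ⟨(E.hi r.pt)ᶜ, hcut.2.1.isOpen_compl, ?_, ?_⟩
    · intro hxhi
      exact hr.2 (hcut.eq_of_memAB hr.1 hxhi)
    · rintro y ⟨hyS, hyO⟩
      have hylo : y ∈ E.lo r.pt := hcut.symm.mem_of_not_memA hyS hyO
      have hyne : y ≠ r.pt := fun h => hyO (h ▸ hcut.p_mem_B)
      have := E.Fval_le_of_above (show r ∈ E.AboveJ y from ⟨hylo, hyne⟩)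
      linarith
  · push_neg at hc1
    rcases Set.eq_empty_or_nonempty (E.AboveJ x) with hemp | ⟨r0, hr0⟩
    · refine ⟨Set.univ, isOpen_univ, trivial, fun y _ => ?_⟩
      have hyx : E.Fval y ≤ E.Fval x := by
        apply csSup_le ⟨_, Set.mem_insert _ _⟩
        rintro t (rfl | ⟨a, ha, rfl⟩)
        · exact E.Fval_ge x
        · rcases eq_or_ne a.pt x with hax | hax
          · have heq : a = (⟨x, hax ▸ a.mem⟩ : E.JT) := JT.ext' hax
            rw [heq]
            exact E.val_le_Fval _
          · have hnot : x ∉ E.lo a.pt := by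
              intro hmem
              exact absurd (show a ∈ E.AboveJ x from ⟨hmem, Ne.symm hax⟩)
                (hemp ▸ Set.notMem_empty a)
            have hxhi : x ∈ E.hi a.pt :=
              (E.lo_hi_cut a.mem).mem_of_not_memA hx hnot
            exact E.le_Fval_of_below (show a ∈ E.Below x from ⟨hxhi, Ne.symm hax⟩)
      linarith
    · exfalso
      have hr0v := hc1 r0 hr0
      have ha2 : E.Fval x < Real.pi / 2 := by
        have := E.val_lt_pi2 r0
        linarith
      obtain ⟨q, hq1, hq2⟩ := arctan_rat_dense (E.Fval_ge x)
        (show E.Fval x < E.Fval x + η by linarith) ha2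
      set w : E.JT := E.theta.symm q with hw
      have hwval : E.val w = Real.arctan q := E.theta_symm_val q
      rcases eq_or_ne x w.pt with hxw | hxw
      · have heqw : w = (⟨x, hxw ▸ w.mem⟩ : E.JT) := JT.ext' hxw.symm
        have h1 : E.val w ≤ E.Fval x := by
          rw [heqw]
          exact E.val_le_Fval _
        rw [hwval] at h1
        linarith
      · by_cases hmem : x ∈ E.lo w.pt
        · have := hc1 w ⟨hmem, hxw⟩
          rw [hwval] at this
          linarith
        · have hxhi : x ∈ E.hi w.pt :=
            (E.lo_hi_cut w.mem).mem_of_not_memA hx hmem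
          have := E.le_Fval_of_below (show w ∈ E.Below x from ⟨hxhi, hxw⟩)
          rw [hwval] at this
          linarith

/-- Injectivity of `Fval` on `S`. -/
lemma Fval_inj {x y : ℝ × ℝ} (hx : x ∈ E.S) (hy : y ∈ E.S) (hxy : x ≠ y) :
    E.Fval x ≠ E.Fval y := by
  obtain ⟨p, hp, q, hq, hpq, A, B, A', B', hcA, hcB, hxA, hyB, hxA', hyB'⟩ :=
    E.sep2 hx hy hxy
  have hP : ((x ∈ E.lo p ∧ x ≠ p) ∧ (y ∈ E.hi p ∧ y ≠ p)) ∨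
      ((y ∈ E.lo p ∧ y ≠ p) ∧ (x ∈ E.hi p ∧ x ≠ p)) := by
    rcases cut_unique E.hS E.hch (E.lo_hi_cut hp) hcA with ⟨h1, h2⟩ | ⟨h1, h2⟩
    · exact Or.inl ⟨⟨h1 ▸ hxA.1, hxA.2⟩, ⟨h2 ▸ hyB.1, hyB.2⟩⟩
    · exact Or.inr ⟨⟨h1 ▸ hyB.1, hyB.2⟩, ⟨h2 ▸ hxA.1, hxA.2⟩⟩
  have hQ : ((x ∈ E.lo q ∧ x ≠ q) ∧ (y ∈ E.hi q ∧ y ≠ q)) ∨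
      ((y ∈ E.lo q ∧ y ≠ q) ∧ (x ∈ E.hi q ∧ x ≠ q)) := by
    rcases cut_unique E.hS E.hch (E.lo_hi_cut hq) hcB with ⟨h1, h2⟩ | ⟨h1, h2⟩
    · exact Or.inl ⟨⟨h1 ▸ hxA'.1, hxA'.2⟩, ⟨h2 ▸ hyB'.1, hyB'.2⟩⟩
    · exact Or.inr ⟨⟨h1 ▸ hyB'.1, hyB'.2⟩, ⟨h2 ▸ hxA'.1, hxA'.2⟩⟩
  set a : E.JT := ⟨p, hp⟩ with hadef
  set b : E.JT := ⟨q, hq⟩ with hbdef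
  have hab : a ≠ b := fun h => hpq (congrArg Subtype.val h)
  rcases hP with ⟨hxl, hyh⟩ | ⟨hyl, hxh⟩ <;> rcases hQ with ⟨hxl', hyh'⟩ | ⟨hyl', hxh'⟩
  · -- x below both, y above both : Fval x < Fval y
    apply ne_of_lt
    rcases hab.lt_or_gt with h | h
    · calc E.Fval x ≤ E.val a := E.Fval_le_of_above ⟨hxl.1, hxl.2⟩
        _ < E.val b := E.val_lt_val h
        _ ≤ E.Fval y := E.le_Fval_of_below ⟨hyh'.1, hyh'.2⟩
    · calc E.Fval x ≤ E.val b := E.Fval_le_of_above ⟨hxl'.1, hxl'.2⟩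
        _ < E.val a := E.val_lt_val h
        _ ≤ E.Fval y := E.le_Fval_of_below ⟨hyh.1, hyh.2⟩
  · -- x below p above q, y above p below q : impossible
    exfalso
    have d1 := E.below_trans hq hp hxh'.1 hxh'.2 hxl.1 hxl.2
    have d2 := E.below_trans hp hq hyh.1 hyh.2 hyl'.1 hyl'.2
    exact hpq (E.le_antisym' hp hq d2.2.1 d1.2.1)
  · exfalso
    have d1 := E.below_trans hp hq hxh.1 hxh.2 hxl'.1 hxl'.2
    have d2 := E.below_trans hq hp hyh'.1 hyh'.2 hyl.1 hyl.2
    exact hpq (E.le_antisym' hp hq d1.2.1 d2.2.1)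
  · -- y below both, x above both : Fval y < Fval x
    apply ne_of_gt
    rcases hab.lt_or_gt with h | h
    · calc E.Fval y ≤ E.val a := E.Fval_le_of_above ⟨hyl.1, hyl.2⟩
        _ < E.val b := E.val_lt_val h
        _ ≤ E.Fval x := E.le_Fval_of_below ⟨hxh'.1, hxh'.2⟩
    · calc E.Fval y ≤ E.val b := E.Fval_le_of_above ⟨hyl'.1, hyl'.2⟩
        _ < E.val a := E.val_lt_val h
        _ ≤ E.Fval x := E.le_Fval_of_below ⟨hxh.1, hxh.2⟩

end Setting

end ArcCrit
/-- **Arc Criterion.** A compact set which, for every `ε > 0`, fills some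
chain of mesh less than `ε`, is an arc. -/
theorem arc_criterion (S : Set (ℝ × ℝ)) (hS : IsCompact S)
    (h : ∀ ε : ℝ, 0 < ε → ∃ (n : ℕ) (D : ℕ → MarkedPiece), 0 < n ∧ IsChainOf n D ∧
      Fills S n D ∧ ∀ i < n, Metric.diam (D i).carrier < ε) :
    Nonempty (S ≃ₜ Icc (0:ℝ) 1) := by
  classical
  have hch : ∀ ε : ℝ, 0 < ε → Nonempty (ArcCrit.GC S ε) := by
    intro ε hε
    obtain ⟨n, D, h1, h2, h3, h4⟩ := h ε hε
    exact ⟨⟨n, D, h1, h2, h3, h4⟩⟩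
  obtain ⟨n₁, D₁, hn₁, _, hfills₁, _⟩ := h 1 one_pos
  set E : ArcCrit.Setting :=
    ⟨S, hS, hch, (D₁ 0).m₁, (D₁ 0).m₂, (hfills₁.2 0 hn₁).1, (hfills₁.2 0 hn₁).2,
      (D₁ 0).ne⟩ with hE
  set F : ℝ × ℝ → ℝ := E.Fval with hF
  have hSp : IsPreconnected S := ArcCrit.S_preconn hS hch
  -- continuity of F on S
  have hFcont : ContinuousOn F S := by
    intro x hx
    rw [Metric.continuousWithinAt_iff]
    intro η hη
    obtain ⟨O₁, hO₁, hxO₁, hest₁⟩ := E.Fval_lower (x := x) hx hη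
    obtain ⟨O₂, hO₂, hxO₂, hest₂⟩ := E.Fval_upper (x := x) hx hη
    obtain ⟨δ, hδ, hball⟩ := Metric.isOpen_iff.1 (hO₁.inter hO₂) x ⟨hxO₁, hxO₂⟩
    refine ⟨δ, hδ, ?_⟩
    intro y hyS hyd
    have hyO : y ∈ O₁ ∩ O₂ := hball (Metric.mem_ball.mpr hyd)
    have h1 := hest₁ y ⟨hyS, hyO.1⟩
    have h2 := hest₂ y ⟨hyS, hyO.2⟩
    rw [Real.dist_eq, abs_lt]
    constructor <;> simp only [hF] at * <;> linarith
  have hFinj : ∀ x ∈ S, ∀ y ∈ S, F x = F y → x = y := by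
    intro x hx y hy hxy
    by_contra hne
    exact E.Fval_inj hx hy hne hxy
  -- the image is a nondegenerate closed interval
  set T : Set ℝ := F '' S with hT
  have hTcpt : IsCompact T := hS.image_of_continuousOn hFcont
  have hTne : T.Nonempty := ⟨F E.x₀, Set.mem_image_of_mem F E.hx₀⟩
  have hTconn : IsConnected T := ⟨hTne, hSp.image F hFcont⟩
  have hTIcc : T = Icc (sInf T) (sSup T) := eq_Icc_of_connected_compact hTconn hTcpt
  set a : ℝ := sInf T with ha
  set b : ℝ := sSup T with hb
  have hFne : F E.x₀ ≠ F E.y₀ := E.Fval_inj E.hx₀ E.hy₀ E.hne₀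
  have hmem1 : F E.x₀ ∈ Icc a b := hTIcc ▸ Set.mem_image_of_mem F E.hx₀
  have hmem2 : F E.y₀ ∈ Icc a b := hTIcc ▸ Set.mem_image_of_mem F E.hy₀
  have hab : a < b := by
    rcases lt_or_ge a b with h' | h'
    · exact h'
    · exfalso
      apply hFne
      have h1 := hmem1.1; have h2 := hmem1.2
      have h3 := hmem2.1; have h4 := hmem2.2
      have : a = b ∨ b < a := eq_or_lt_of_le h' |>.imp_left Eq.symm
      rcases this with h5 | h5 <;> linarith
  -- the homeomorphism from S to T
  haveI : CompactSpace ↥S := isCompact_iff_compactSpace.mp hS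
  have hGmem : ∀ z : ↥S, F z.1 ∈ T := fun z => Set.mem_image_of_mem F z.2
  set G : ↥S → ↥T := fun z => ⟨F z.1, hGmem z⟩ with hG
  have hGcont : Continuous G := by
    apply Continuous.subtype_mk
    exact hFcont.restrict
  have hGbij : Function.Bijective G := by
    constructor
    · intro z₁ z₂ hz
      have : F z₁.1 = F z₂.1 := congrArg Subtype.val hz
      exact Subtype.ext (hFinj _ z₁.2 _ z₂.2 this)
    · rintro ⟨t, ht⟩
      obtain ⟨z, hz, rfl⟩ := ht
      exact ⟨⟨z, hz⟩, rfl⟩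
  set e : ↥S ≃ ↥T := Equiv.ofBijective G hGbij with he
  have homeo1 : ↥S ≃ₜ ↥T := Continuous.homeoOfEquivCompactToT2 (f := e) hGcont
  have homeo2 : ↥T ≃ₜ ↥(Icc a b) := Homeomorph.setCongr hTIcc
  -- the affine homeomorphism from [0,1] to [a,b]
  have hba : (0 : ℝ) < b - a := by linarith
  set e' : ℝ ≃ₜ ℝ := affineHomeomorph (b - a) a (ne_of_gt hba) with he'
  have himg : (⇑e') '' Icc (0:ℝ) 1 = Icc a b := by
    have : (⇑e') '' Icc (0:ℝ) 1 = (fun x => (b - a) * x + a) '' Icc (0:ℝ) 1 := by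
      apply Set.image_congr
      intro x _
      simp [he', affineHomeomorph]
    rw [this, image_affine_Icc' hba a 0 1]
    norm_num
  have homeo3 : ↥(Icc (0:ℝ) 1) ≃ₜ ↥(Icc a b) :=
    (Homeomorph.image e' (Icc (0:ℝ) 1)).trans (Homeomorph.setCongr himg)
  exact ⟨(homeo1.trans homeo2).trans homeo3.symm⟩

end
end
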